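/- arXiv:1404.4415 — 3 statements merged into one kernel-verified Lean document; each statement's English description precedes it below -/
import Mathlib

section
/- Let λ, μ ∈ 𝒫^l_n, c ≥ 0 and 1 ≤ m ≤ l. Suppose λ ⊵ μ and |λ_L(c,m)| = |μ_L(c,m)|. Then λ_L(c,m) ⊵ μ_L(c,m) and λ_R(c,m) ⊵ μ_R(c,m); in particular (λ^(m))'_c ≥ (μ^(m))'_c ≥ (μ^(m))'_{c+1}, where ν'_c = |{j ≥ 1 : ν_j ≥ c}| denotes the length of column c of a partition ν. -/
namespace FS
open scoped Classical

/-- A node `(r, c, m)`: row `r`, column `c`, component `m` (all 1-based). -/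
abbrev Node := ℕ × ℕ × ℕ

/-- Membership of a node in the Young diagram of the multipartition `p`,
where `p m r` is the `r`-th part of the `m`-th component. -/
def InDiag (p : ℕ → ℕ → ℕ) (A : Node) : Prop :=
  1 ≤ A.2.1 ∧ A.2.1 ≤ p A.2.2 A.1

/-- `p` is an `l`-multipartition of `n` (components indexed `1,…,l`, rows indexed `1,…`). -/
def IsMP (l n : ℕ) (p : ℕ → ℕ → ℕ) : Prop :=
  (∀ m r, (m = 0 ∨ l < m ∨ r = 0 ∨ n < r) → p m r = 0) ∧
  (∀ m r, 1 ≤ r → p m (r + 1) ≤ p m r) ∧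
  (∑ m ∈ Finset.Icc 1 l, ∑ r ∈ Finset.Icc 1 n, p m r) = n

/-- Total size of an `l`-multicomposition (rows bounded by `n`). -/
def mpSize (l n : ℕ) (p : ℕ → ℕ → ℕ) : ℕ :=
  ∑ m ∈ Finset.Icc 1 l, ∑ r ∈ Finset.Icc 1 n, p m r

/-- Size of the `m`-th component. -/
def compSize (n : ℕ) (p : ℕ → ℕ → ℕ) (m : ℕ) : ℕ :=
  ∑ r ∈ Finset.Icc 1 n, p m r

/-- Length of column `c` of component `m`, i.e. `(p^(m))'_c`. -/
def colLen (n : ℕ) (p : ℕ → ℕ → ℕ) (m c : ℕ) : ℕ :=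
  ((Finset.Icc 1 n).filter fun r => c ≤ p m r).card

/-- Dominance order on `l`-multicompositions: `Dom l N p q` means `p ⊵ q`. -/
def Dom (l N : ℕ) (p q : ℕ → ℕ → ℕ) : Prop :=
  ∀ m r, 1 ≤ m → m ≤ l →
    (∑ m' ∈ Finset.Icc 1 (m - 1), compSize N q m') + ∑ r' ∈ Finset.Icc 1 r, q m r' ≤
      (∑ m' ∈ Finset.Icc 1 (m - 1), compSize N p m') + ∑ r' ∈ Finset.Icc 1 r, p m r'

/-- `t` is a `p`-tableau: a bijection from the diagram of `p` onto `{1,…,n}`. -/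
def IsTab (n : ℕ) (p : ℕ → ℕ → ℕ) (t : Node → ℕ) : Prop :=
  (∀ A, InDiag p A → 1 ≤ t A ∧ t A ≤ n) ∧
  (∀ A B, InDiag p A → InDiag p B → t A = t B → A = B) ∧
  (∀ i, 1 ≤ i → i ≤ n → ∃ A, InDiag p A ∧ t A = i)

/-- Entries increase from left to right along each row. -/
def RowStrict (p : ℕ → ℕ → ℕ) (t : Node → ℕ) : Prop :=
  ∀ r c m, InDiag p (r, c, m) → InDiag p (r, c + 1, m) → t (r, c, m) < t (r, c + 1, m)

/-- Entries increase down each column. -/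
def ColStrict (p : ℕ → ℕ → ℕ) (t : Node → ℕ) : Prop :=
  ∀ r c m, InDiag p (r, c, m) → InDiag p (r + 1, c, m) → t (r, c, m) < t (r + 1, c, m)

/-- A standard tableau is both row-strict and column-strict. -/
def IsStd (p : ℕ → ℕ → ℕ) (t : Node → ℕ) : Prop := RowStrict p t ∧ ColStrict p t

/-- The tableau `t_λ`, obtained by writing `1,…,n` in order down successive columns
from left to right (components from `l` down to `1`). -/
def colTab (l n : ℕ) (p : ℕ → ℕ → ℕ) : Node → ℕ := fun A =>
  (∑ m' ∈ Finset.Icc (A.2.2 + 1) l, compSize n p m') +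
    (∑ c' ∈ Finset.Icc 1 (A.2.1 - 1), colLen n p A.2.2 c') + A.1

/-- The tableau `t^λ`, obtained by writing `1,…,n` in order along successive rows
from top to bottom (components from `1` up to `l`). -/
def rowTab (n : ℕ) (p : ℕ → ℕ → ℕ) : Node → ℕ := fun A =>
  (∑ m' ∈ Finset.Icc 1 (A.2.2 - 1), compSize n p m') +
    (∑ r' ∈ Finset.Icc 1 (A.1 - 1), p A.2.2 r') + A.2.1

/-- The Coxeter generator `s_i = (i, i+1)` of the symmetric group. -/
def sw (i : ℕ) : Equiv.Perm ℕ := Equiv.swap i (i + 1)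

/-- The product `s_{i_1} ⋯ s_{i_k}` corresponding to a word `L = [i_1,…,i_k]`. -/
def wordProd (L : List ℕ) : Equiv.Perm ℕ := (L.map sw).prod

/-- `L` is an expression for `w` in the Coxeter generators `s_1,…,s_{n-1}` of `S_n`. -/
def IsWord (n : ℕ) (L : List ℕ) (w : Equiv.Perm ℕ) : Prop :=
  (∀ i ∈ L, 1 ≤ i ∧ i + 1 ≤ n) ∧ wordProd L = w

/-- The Coxeter length of `w ∈ S_n`. -/
noncomputable def len (n : ℕ) (w : Equiv.Perm ℕ) : ℕ :=
  sInf {k | ∃ L, IsWord n L w ∧ L.length = k}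

/-- `L` is a reduced expression for `w ∈ S_n`. -/
def IsReduced (n : ℕ) (L : List ℕ) (w : Equiv.Perm ℕ) : Prop :=
  IsWord n L w ∧ L.length = len n w

/-- The Bruhat order on `S_n`: `x ≤ w` iff some reduced expression for `w` has an
expression for `x` as a subsequence. -/
def BruhatLE (n : ℕ) (x w : Equiv.Perm ℕ) : Prop :=
  ∃ L, IsReduced n L w ∧ ∃ L', L'.Sublist L ∧ wordProd L' = x

/-- Strict Bruhat order. -/
def BruhatLT (n : ℕ) (x w : Equiv.Perm ℕ) : Prop := BruhatLE n x w ∧ x ≠ w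

/-- The left (weak) order on `S_n`: `x ≤_L w` iff `ℓ(w) = ℓ(w x⁻¹) + ℓ(x)`. -/
def LeftLE (n : ℕ) (x w : Equiv.Perm ℕ) : Prop :=
  len n w = len n (w * x⁻¹) + len n x

/-- `w` is a permutation of `{1,…,n}` (fixing everything else). -/
def PermOf (n : ℕ) (w : Equiv.Perm ℕ) : Prop := ∀ i, i = 0 ∨ n < i → w i = i

/-- `w` is the permutation sending the base tableau `base` to the tableau `t`
(e.g. `w = w_t` when `base = t_λ`). -/
def IsPermOfTab (n : ℕ) (p : ℕ → ℕ → ℕ) (base t : Node → ℕ) (w : Equiv.Perm ℕ) : Prop :=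
  PermOf n w ∧ ∀ A, InDiag p A → w (base A) = t A

/-- `Shape(t↓j)`: the multicomposition whose `(m, r)` entry is the number of nodes in
row `r` of component `m` whose entry under `t` is at most `j`. -/
def shape (n : ℕ) (p : ℕ → ℕ → ℕ) (t : Node → ℕ) (j : ℕ) : ℕ → ℕ → ℕ :=
  fun m r => ((Finset.Icc 1 n).filter fun c => c ≤ p m r ∧ t (r, c, m) ≤ j).card

/-- `Shape(t↓j)'`: the conjugate multicomposition, whose `(m, c)` entry is the number of
nodes in column `c` of component `l + 1 - m` whose entry under `t` is at most `j`. -/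
def shapeConj (l n : ℕ) (p : ℕ → ℕ → ℕ) (t : Node → ℕ) (j : ℕ) : ℕ → ℕ → ℕ :=
  fun m c => ((Finset.Icc 1 n).filter fun r => c ≤ p (l + 1 - m) r ∧ t (r, c, l + 1 - m) ≤ j).card

/-- `A` lies weakly to the left of `B`. -/
def WeaklyLeft (A B : Node) : Prop :=
  B.2.2 < A.2.2 ∨ (A.2.2 = B.2.2 ∧ A.2.1 ≤ B.2.1)

/-- `A` lies weakly above `B`. -/
def WeaklyAbove (A B : Node) : Prop :=
  A.2.2 < B.2.2 ∨ (A.2.2 = B.2.2 ∧ A.1 ≤ B.1)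

/-- `A` lies weakly to the right of `B`. -/
def WeaklyRight (A B : Node) : Prop :=
  A.2.2 < B.2.2 ∨ (A.2.2 = B.2.2 ∧ B.2.1 ≤ A.2.1)

/-- `t` (a `mu`-tableau) is `lam`-column-dominated on `1,…,j`: each `i ≤ j` appears in `t`
at least as far to the left as it does in `t_lam`. -/
def ColDomOn (l n : ℕ) (lam mu : ℕ → ℕ → ℕ) (t : Node → ℕ) (j : ℕ) : Prop :=
  ∀ i A B, 1 ≤ i → i ≤ j → InDiag mu A → t A = i → InDiag lam B →
    colTab l n lam B = i → WeaklyLeft A B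

/-- `t` is weakly `lam`-column-dominated on `1,…,j`: each `i ≤ j` appears in `t` in a
component at least as far to the left as it does in `t_lam`. -/
def WColDomOn (l n : ℕ) (lam mu : ℕ → ℕ → ℕ) (t : Node → ℕ) (j : ℕ) : Prop :=
  ∀ i A B, 1 ≤ i → i ≤ j → InDiag mu A → t A = i → InDiag lam B →
    colTab l n lam B = i → B.2.2 ≤ A.2.2

/-- `t` (a `mu`-tableau) is `lam`-row-dominated on `1,…,j`: each `i ≤ j` appears in `t`
at least as high as it does in `t^lam`. -/
def RowDomOn (n : ℕ) (lam mu : ℕ → ℕ → ℕ) (t : Node → ℕ) (j : ℕ) : Prop :=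
  ∀ i A B, 1 ≤ i → i ≤ j → InDiag mu A → t A = i → InDiag lam B →
    rowTab n lam B = i → WeaklyAbove A B

/-- The multipartition `λ_L(c, m)`: the first `c` columns of component `m`, followed by
components `m+1,…,l`. -/
def leftPart (lam : ℕ → ℕ → ℕ) (c m : ℕ) : ℕ → ℕ → ℕ := fun k r =>
  if k = 0 then 0 else if k = 1 then min (lam m r) c else lam (m + k - 1) r

/-- The multipartition `λ_R(c, m)`: components `1,…,m-1`, followed by the part of
component `m` after its first `c` columns. -/
def rightPart (lam : ℕ → ℕ → ℕ) (c m : ℕ) : ℕ → ℕ → ℕ := fun k r =>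
  if k < m then lam k r else if k = m then lam m r - c else 0

/-- The multipartition `λ_T(r₀, m)`: components `1,…,m-1`, followed by the first `r₀`
rows of component `m`. -/
def topPart (lam : ℕ → ℕ → ℕ) (r₀ m : ℕ) : ℕ → ℕ → ℕ := fun k r =>
  if k < m then lam k r else if k = m then (if r ≤ r₀ then lam m r else 0) else 0

/-- The multipartition `λ_B(r₀, m)`: the rows of component `m` after row `r₀`, followed
by components `m+1,…,l`. -/
def botPart (lam : ℕ → ℕ → ℕ) (r₀ m : ℕ) : ℕ → ℕ → ℕ := fun k r =>
  if k = 0 ∨ r = 0 then 0 else if k = 1 then lam m (r₀ + r) else lam (m + k - 1) r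

/-- The glued tableau `t_L # t_R`: places `1,…,n_L` on the left part as in `t_L`, and
places `n_L + t_R(A)` at the node corresponding to each node `A` of the right part. -/
def glueLR (nL c m : ℕ) (tL tR : Node → ℕ) : Node → ℕ := fun A =>
  if A.2.2 < m then nL + tR A
  else if A.2.2 = m then
    (if A.2.1 ≤ c then tL (A.1, A.2.1, 1) else nL + tR (A.1, A.2.1 - c, m))
  else tL (A.1, A.2.1, A.2.2 - m + 1)

/-- The tableau `t⁺` obtained from a tableau `t` of `μ_R(1,m)` by increasing all entries
by `k`, adjoining a first column with entries `1,…,k` to component `m`, and adjoining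
empty components `m+1,…,l`. -/
def addFirstCol (k m : ℕ) (t : Node → ℕ) : Node → ℕ := fun A =>
  if A.2.2 = m then (if A.2.1 = 1 then A.1 else k + t (A.1, A.2.1 - 1, m))
  else k + t A

/-- The tableau `t⁺` obtained from a tableau `t` of `μ_L(d-1,m)` by adjoining empty
components `1,…,m-1` and adjoining a column `d` to component `m` with entries
`nk+1,…,nk+k` from top to bottom. -/
def addLastCol (nk m d : ℕ) (t : Node → ℕ) : Node → ℕ := fun A =>
  if A.2.2 = m then (if A.2.1 = d then nk + A.1 else t (A.1, A.2.1, 1))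
  else t (A.1, A.2.1, A.2.2 - m + 1)

/-- The `i`-th smallest element of a finite set of naturals (1-based). -/
def nthElt (S : Finset ℕ) (i : ℕ) : ℕ := (S.sort (· ≤ ·)).getD (i - 1) 0

/-- The set `S_B` of entries of `t_λ` lying in the bottom region (component `> m`, or
component `m` in a row `> r₀`). -/
noncomputable def SB (l n : ℕ) (lam : ℕ → ℕ → ℕ) (r₀ m : ℕ) : Finset ℕ :=
  (Finset.Icc 1 n).filter fun i =>
    ∃ A, InDiag lam A ∧ colTab l n lam A = i ∧ (m < A.2.2 ∨ (A.2.2 = m ∧ r₀ < A.1))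

/-- The glued tableau `t #̄ s`: on the bottom region the entries are `lab_B ∘ t` and on
the top region they are `lab_T ∘ s`, where `lab_B`, `lab_T` are the order-preserving
bijections onto `S_B`, `S_T`. -/
def glueBT (S_B S_T : Finset ℕ) (r₀ m : ℕ) (tB tT : Node → ℕ) : Node → ℕ := fun A =>
  if A.2.2 < m then nthElt S_T (tT A)
  else if A.2.2 = m then
    (if A.1 ≤ r₀ then nthElt S_T (tT A) else nthElt S_B (tB (A.1 - r₀, A.2.1, 1)))
  else nthElt S_B (tB (A.1, A.2.1, A.2.2 - m + 1))

/-- The residue of a node `(r, c, m)` with respect to the multicharge `κ`: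
`κ_m + c - r` in `ℤ/eℤ` (with `ZMod 0 = ℤ` encoding `e = ∞`). -/
def resNode (e : ℕ) (κ : ℕ → ZMod e) (A : Node) : ZMod e :=
  κ A.2.2 + (A.2.1 : ZMod e) - (A.1 : ZMod e)


lemma anti_of_step {p : ℕ → ℕ → ℕ} (h : ∀ m r, 1 ≤ r → p m (r+1) ≤ p m r)
    (m : ℕ) : ∀ r₁ r₂, 1 ≤ r₁ → r₁ ≤ r₂ → p m r₂ ≤ p m r₁ := by
  intro r₁ r₂ h1 h12
  induction r₂, h12 using Nat.le_induction with
  | base => exact le_rfl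
  | succ r₂ hle ih => exact le_trans (h m r₂ (le_trans h1 hle)) ih

lemma downward_eq_Icc {S : Finset ℕ} {n : ℕ} (hsub : S ⊆ Finset.Icc 1 n)
    (hdc : ∀ j k, j ∈ S → 1 ≤ k → k ≤ j → k ∈ S) : S = Finset.Icc 1 S.card := by
  have hcard : ∀ j ∈ S, j ≤ S.card := by
    intro j hj
    have hIcc : Finset.Icc 1 j ⊆ S := by
      intro k hk
      simp only [Finset.mem_Icc] at hk
      exact hdc j k hj hk.1 hk.2
    have := Finset.card_le_card hIcc
    simpa using this
  apply Finset.eq_of_subset_of_card_le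
  · intro j hj
    have := hsub hj
    simp only [Finset.mem_Icc] at this ⊢
    exact ⟨this.1, hcard j hj⟩
  · simp

lemma col_eq_Icc (n c : ℕ) (ν : ℕ → ℕ)
    (hanti : ∀ r₁ r₂, 1 ≤ r₁ → r₁ ≤ r₂ → ν r₂ ≤ ν r₁) :
    (Finset.Icc 1 n).filter (fun r => c ≤ ν r) =
      Finset.Icc 1 ((Finset.Icc 1 n).filter (fun r => c ≤ ν r)).card := by
  apply downward_eq_Icc (Finset.filter_subset _ _)
  intro j k hj h1k hkj
  simp only [Finset.mem_filter, Finset.mem_Icc] at *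
  exact ⟨⟨h1k, le_trans hkj hj.1.2⟩, le_trans hj.2 (hanti k j h1k hkj)⟩

lemma col_facts (n c : ℕ) (ν : ℕ → ℕ)
    (hanti : ∀ r₁ r₂, 1 ≤ r₁ → r₁ ≤ r₂ → ν r₂ ≤ ν r₁) :
    (∀ r, 1 ≤ r → r ≤ ((Finset.Icc 1 n).filter (fun r => c ≤ ν r)).card → c ≤ ν r) ∧
    (∀ r, ((Finset.Icc 1 n).filter (fun r => c ≤ ν r)).card < r → r ≤ n → ν r < c) ∧
    ((Finset.Icc 1 n).filter (fun r => c ≤ ν r)).card ≤ n := by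
  have heq := col_eq_Icc n c ν hanti
  refine ⟨?_, ?_, ?_⟩
  · intro r h1 h2
    have : r ∈ Finset.Icc 1 ((Finset.Icc 1 n).filter (fun r => c ≤ ν r)).card :=
      Finset.mem_Icc.2 ⟨h1, h2⟩
    rw [← heq] at this
    exact (Finset.mem_filter.1 this).2
  · intro r hlt hrn
    by_contra h
    push_neg at h
    have : r ∈ (Finset.Icc 1 n).filter (fun r => c ≤ ν r) :=
      Finset.mem_filter.2 ⟨Finset.mem_Icc.2 ⟨by omega, hrn⟩, h⟩
    rw [heq] at this
    have := (Finset.mem_Icc.1 this).2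
    omega
  · calc ((Finset.Icc 1 n).filter (fun r => c ≤ ν r)).card
        ≤ (Finset.Icc 1 n).card := Finset.card_filter_le _ _
      _ = n := by simp

lemma Ioc_split (F : ℕ → ℕ) {a b c : ℕ} (hab : a ≤ b) (hbc : b ≤ c) :
    ∑ k ∈ Finset.Ioc a c, F k = (∑ k ∈ Finset.Ioc a b, F k) + ∑ k ∈ Finset.Ioc b c, F k :=
  (Finset.sum_Ioc_consecutive F hab hbc).symm

lemma sum_split_three (F : ℕ → ℕ) {m l : ℕ} (hm1 : 1 ≤ m) (hm2 : m ≤ l) :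
    ∑ k ∈ Finset.Ioc 0 l, F k =
      (∑ k ∈ Finset.Ioc 0 (m-1), F k) + F m + ∑ k ∈ Finset.Ioc m l, F k := by
  rw [Ioc_split F (by omega : (0:ℕ) ≤ m - 1) (by omega : m - 1 ≤ l),
      Ioc_split F (by omega : m - 1 ≤ m) hm2]
  have h : Finset.Ioc (m-1) m = {m} := by
    ext x; simp only [Finset.mem_Ioc, Finset.mem_singleton]; omega
  rw [h, Finset.sum_singleton, add_assoc]

lemma reindex_comp (F : ℕ → ℕ) (m : ℕ) (hm : 1 ≤ m) :
    ∀ K, ∑ k ∈ Finset.Ioc 1 K, F (m + k - 1) = ∑ m' ∈ Finset.Ioc m (m + K - 1), F m' := by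
  intro K
  induction K with
  | zero => simp [show Finset.Ioc m (m + 0 - 1) = ∅ from Finset.Ioc_eq_empty (by omega)]
  | succ K ih =>
    rcases Nat.eq_zero_or_pos K with rfl | hK
    · simp [show m + (0+1) - 1 = m from by omega]
    · rw [Finset.sum_Ioc_succ_top (by omega : 1 ≤ K), ih,
          show m + (K+1) - 1 = (m + K - 1) + 1 from by omega,
          Finset.sum_Ioc_succ_top (by omega : m ≤ m + K - 1),
          show m + K - 1 + 1 = m + K from by omega]


lemma sum_stable (g : ℕ → ℕ) (n : ℕ) (hz : ∀ r', n < r' → g r' = 0) {r : ℕ} (h : n ≤ r) :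
    ∑ r' ∈ Finset.Ioc 0 r, g r' = ∑ r' ∈ Finset.Ioc 0 n, g r' := by
  rw [Ioc_split g (Nat.zero_le n) h]
  have h0 : ∑ r' ∈ Finset.Ioc n r, g r' = 0 :=
    Finset.sum_eq_zero (fun x hx => hz x (Finset.mem_Ioc.1 hx).1)
  omega

lemma colLen_facts {n : ℕ} (p : ℕ → ℕ → ℕ) (hstep : ∀ m r, 1 ≤ r → p m (r+1) ≤ p m r)
    (m c : ℕ) :
    (∀ r, 1 ≤ r → r ≤ colLen n p m c → c ≤ p m r) ∧
    (∀ r, colLen n p m c < r → r ≤ n → p m r < c) ∧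
    colLen n p m c ≤ n := by
  have := col_facts n c (fun r => p m r) (anti_of_step hstep m)
  exact this

lemma leftPart_prefix (n m c : ℕ) (hm : 1 ≤ m) (ν : ℕ → ℕ → ℕ) (K : ℕ) (hK : 1 ≤ K) :
    ∑ k ∈ Finset.Ioc 0 K, compSize n (leftPart ν c m) k =
      (∑ r ∈ Finset.Ioc 0 n, min (ν m r) c) + ∑ m' ∈ Finset.Ioc m (m + K - 1), compSize n ν m' := by
  rw [Ioc_split (compSize n (leftPart ν c m)) (by omega : (0:ℕ) ≤ 1) hK]
  have hA : ∑ k ∈ Finset.Ioc 0 1, compSize n (leftPart ν c m) k =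
      ∑ r ∈ Finset.Ioc 0 n, min (ν m r) c := by
    have h1 : Finset.Ioc (0:ℕ) 1 = {1} := by
      ext x; simp only [Finset.mem_Ioc, Finset.mem_singleton]; omega
    rw [h1, Finset.sum_singleton, compSize,
        show Finset.Icc 1 n = Finset.Ioc 0 n from Finset.Icc_add_one_left_eq_Ioc 0 n]
    apply Finset.sum_congr rfl
    intro r _
    simp [leftPart]
  have hB : ∑ k ∈ Finset.Ioc 1 K, compSize n (leftPart ν c m) k =
      ∑ m' ∈ Finset.Ioc m (m + K - 1), compSize n ν m' := by
    rw [← reindex_comp (compSize n ν) m hm K]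
    apply Finset.sum_congr rfl
    intro k hk
    have hk' := Finset.mem_Ioc.1 hk
    unfold compSize
    apply Finset.sum_congr rfl
    intro r _
    simp [leftPart, show ¬ k = 0 by omega, show ¬ k = 1 by omega]
  rw [hA, hB]



/-- If `λ ⊵ μ` and `|λ_L(c,m)| = |μ_L(c,m)|`, then
`λ_L(c,m) ⊵ μ_L(c,m)` and `λ_R(c,m) ⊵ μ_R(c,m)`; in particular
`(λ^(m))'_c ≥ (μ^(m))'_c ≥ (μ^(m))'_{c+1}`. -/
theorem dom_left_right_parts (l n : ℕ) (hl : 1 ≤ l) (hn : 1 ≤ n)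
    (c m : ℕ) (hm1 : 1 ≤ m) (hm2 : m ≤ l)
    (lam mu : ℕ → ℕ → ℕ) (hlam : IsMP l n lam) (hmu : IsMP l n mu)
    (hdom : Dom l n lam mu)
    (hsize : mpSize (l - m + 1) n (leftPart lam c m) =
      mpSize (l - m + 1) n (leftPart mu c m)) :
    Dom (l - m + 1) n (leftPart lam c m) (leftPart mu c m) ∧
      Dom m n (rightPart lam c m) (rightPart mu c m) ∧
      colLen n mu m (c + 1) ≤ colLen n mu m c ∧
      colLen n mu m c ≤ colLen n lam m c := by
  obtain ⟨hlz, hlstep, hlsum⟩ := hlam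
  obtain ⟨hmz, hmstep, hmsum⟩ := hmu
  have hIcc : ∀ x : ℕ, Finset.Icc 1 x = Finset.Ioc 0 x := fun x => Finset.Icc_add_one_left_eq_Ioc 0 x
  obtain ⟨hlmem, hlnot, hlle⟩ := colLen_facts (n := n) lam hlstep m c
  obtain ⟨hmmem, hmnot, hmle⟩ := colLen_facts (n := n) mu hmstep m c
  set Cl := ∑ m' ∈ Finset.Icc 1 (m-1), compSize n lam m' with hCl
  set Cm := ∑ m' ∈ Finset.Icc 1 (m-1), compSize n mu m' with hCm
  set Tl := ∑ m' ∈ Finset.Ioc m l, compSize n lam m' with hTl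
  set Tm := ∑ m' ∈ Finset.Ioc m l, compSize n mu m' with hTm
  set p : ℕ → ℕ := fun r => ∑ r' ∈ Finset.Ioc 0 r, lam m r' with hP
  set q : ℕ → ℕ := fun r => ∑ r' ∈ Finset.Ioc 0 r, mu m r' with hQ
  set fl : ℕ → ℕ := fun r => ∑ r' ∈ Finset.Ioc 0 r, min (lam m r') c with hfl
  set fm : ℕ → ℕ := fun r => ∑ r' ∈ Finset.Ioc 0 r, min (mu m r') c with hfm
  set gl : ℕ → ℕ := fun r => ∑ r' ∈ Finset.Ioc 0 r, (lam m r' - c) with hgl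
  set gm : ℕ → ℕ := fun r => ∑ r' ∈ Finset.Ioc 0 r, (mu m r' - c) with hgm
  -- dominance at component m, in Ioc form
  have hd : ∀ r, Cm + q r ≤ Cl + p r := by
    intro r
    have := hdom m r hm1 hm2
    rw [hIcc r] at this
    simpa [hCm, hCl, hQ, hP] using this
  -- totals
  have hpn : p n = compSize n lam m := by simp only [hP, compSize, hIcc n]
  have hqn : q n = compSize n mu m := by simp only [hQ, compSize, hIcc n]
  have htotl : Cl + p n + Tl = n := by
    have h0 : (∑ m' ∈ Finset.Icc 1 l, compSize n lam m') = n := hlsum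
    rw [hIcc l, sum_split_three (compSize n lam) hm1 hm2] at h0
    rw [hpn, hCl, hIcc (m-1)]
    exact h0
  have htotm : Cm + q n + Tm = n := by
    have h0 : (∑ m' ∈ Finset.Icc 1 l, compSize n mu m') = n := hmsum
    rw [hIcc l, sum_split_three (compSize n mu) hm1 hm2] at h0
    rw [hqn, hCm, hIcc (m-1)]
    exact h0
  -- f + g = p
  have hfgl : ∀ r, fl r + gl r = p r := by
    intro r
    simp only [hfl, hgl, hP]
    rw [← Finset.sum_add_distrib]
    exact Finset.sum_congr rfl (fun x _ => by omega)
  have hfgm : ∀ r, fm r + gm r = q r := by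
    intro r
    simp only [hfm, hgm, hQ]
    rw [← Finset.sum_add_distrib]
    exact Finset.sum_congr rfl (fun x _ => by omega)
  -- T_l ≤ T_m
  have hT : Tl ≤ Tm := by have := hd n; omega
  -- size hypothesis, rewritten
  have hfix : fl n + Tl = fm n + Tm := by
    have h1 := leftPart_prefix n m c hm1 lam (l-m+1) (by omega)
    have h2 := leftPart_prefix n m c hm1 mu (l-m+1) (by omega)
    rw [show m + (l-m+1) - 1 = l from by omega] at h1 h2
    have h0l : mpSize (l-m+1) n (leftPart lam c m) =
        ∑ k ∈ Finset.Ioc 0 (l-m+1), compSize n (leftPart lam c m) k := by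
      rw [mpSize, hIcc]; rfl
    have h0m : mpSize (l-m+1) n (leftPart mu c m) =
        ∑ k ∈ Finset.Ioc 0 (l-m+1), compSize n (leftPart mu c m) k := by
      rw [mpSize, hIcc]; rfl
    rw [h0l, h0m, h1, h2] at hsize
    rw [hfl, hfm, hTl, hTm]
    exact hsize
  -- R-equality: Cl + gl n = Cm + gm n
  have hR : Cl + gl n = Cm + gm n := by
    have h1 := hfgl n
    have h2 := hfgm n
    omega
  -- tail inequality
  have tail : ∀ r, r ≤ n →
      (∑ r' ∈ Finset.Ioc r n, min (lam m r') c) + Tl ≤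
        (∑ r' ∈ Finset.Ioc r n, min (mu m r') c) + Tm := by
    intro r hrn
    set t := max r (colLen n mu m c) with ht
    have h1 : r ≤ t := le_max_left _ _
    have h2 : t ≤ n := by omega
    have hmu1 : ∑ r' ∈ Finset.Ioc r t, min (mu m r') c = (t - r) * c := by
      rw [Finset.sum_congr rfl (fun x hx => ?_), Finset.sum_const, Nat.card_Ioc, smul_eq_mul]
      have hx' := Finset.mem_Ioc.1 hx
      exact min_eq_right (hmmem x (by omega) (by omega))
    have hmu2 : ∑ r' ∈ Finset.Ioc t n, min (mu m r') c = ∑ r' ∈ Finset.Ioc t n, mu m r' := by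
      apply Finset.sum_congr rfl
      intro x hx
      have hx' := Finset.mem_Ioc.1 hx
      exact min_eq_left (le_of_lt (hmnot x (by omega) hx'.2))
    have hla1 : ∑ r' ∈ Finset.Ioc r t, min (lam m r') c ≤ (t - r) * c := by
      calc ∑ r' ∈ Finset.Ioc r t, min (lam m r') c ≤ ∑ _r' ∈ Finset.Ioc r t, c :=
            Finset.sum_le_sum (fun x _ => min_le_right _ _)
        _ = (t - r) * c := by rw [Finset.sum_const, Nat.card_Ioc, smul_eq_mul]
    have hla2 : ∑ r' ∈ Finset.Ioc t n, min (lam m r') c ≤ ∑ r' ∈ Finset.Ioc t n, lam m r' :=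
      Finset.sum_le_sum (fun x _ => min_le_left _ _)
    have hsplL : ∑ r' ∈ Finset.Ioc r n, min (lam m r') c =
        (∑ r' ∈ Finset.Ioc r t, min (lam m r') c) + ∑ r' ∈ Finset.Ioc t n, min (lam m r') c :=
      Ioc_split _ h1 h2
    have hsplM : ∑ r' ∈ Finset.Ioc r n, min (mu m r') c =
        (∑ r' ∈ Finset.Ioc r t, min (mu m r') c) + ∑ r' ∈ Finset.Ioc t n, min (mu m r') c :=
      Ioc_split _ h1 h2
    have e1 : p t + ∑ r' ∈ Finset.Ioc t n, lam m r' = p n := by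
      simp only [hP]; exact (Ioc_split _ (Nat.zero_le t) h2).symm
    have e2 : q t + ∑ r' ∈ Finset.Ioc t n, mu m r' = q n := by
      simp only [hQ]; exact (Ioc_split _ (Nat.zero_le t) h2).symm
    have hdt := hd t
    obtain ⟨E, hE⟩ : ∃ E, (t - r) * c = E := ⟨_, rfl⟩
    rw [hE] at hmu1 hla1
    omega
  -- KEY1 : fm r ≤ fl r for all r
  have key1 : ∀ r, fm r ≤ fl r := by
    intro r
    rcases le_or_gt r n with h | h
    · have hsl : fl r + ∑ r' ∈ Finset.Ioc r n, min (lam m r') c = fl n := by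
        simp only [hfl]; exact (Ioc_split _ (Nat.zero_le r) h).symm
      have hsm : fm r + ∑ r' ∈ Finset.Ioc r n, min (mu m r') c = fm n := by
        simp only [hfm]; exact (Ioc_split _ (Nat.zero_le r) h).symm
      have := tail r h
      omega
    · have hsl : fl r = fl n := by
        simp only [hfl]
        exact sum_stable _ n (fun r' hr' => by simp [hlz m r' (by omega)]) (le_of_lt h)
      have hsm : fm r = fm n := by
        simp only [hfm]
        exact sum_stable _ n (fun r' hr' => by simp [hmz m r' (by omega)]) (le_of_lt h)
      omega
  -- KEY2 : Cm + gm r ≤ Cl + gl r for all r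
  have key2 : ∀ r, Cm + gm r ≤ Cl + gl r := by
    intro r
    set s := min r (colLen n mu m c) with hs
    have hsr : s ≤ r := min_le_left _ _
    have h1 : gm r = gm s := by
      simp only [hgm]
      rw [Ioc_split _ (Nat.zero_le s) hsr]
      have h0 : ∑ r' ∈ Finset.Ioc s r, (mu m r' - c) = 0 := by
        apply Finset.sum_eq_zero
        intro x hx
        have hx' := Finset.mem_Ioc.1 hx
        rcases le_or_gt x n with hxn | hxn
        · have : mu m x < c := hmnot x (by omega) hxn
          omega
        · simp [hmz m x (by omega)]
      omega
    have hsc : s * c = ∑ _x ∈ Finset.Ioc 0 s, c := by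
      rw [Finset.sum_const, Nat.card_Ioc, Nat.sub_zero, smul_eq_mul]
    have h2 : gm s + s * c = q s := by
      simp only [hgm, hQ]
      rw [hsc, ← Finset.sum_add_distrib]
      apply Finset.sum_congr rfl
      intro x hx
      have hx' := Finset.mem_Ioc.1 hx
      have : c ≤ mu m x := hmmem x (by omega) (by omega)
      omega
    have h3 : p s ≤ gl s + s * c := by
      simp only [hgl, hP]
      rw [hsc, ← Finset.sum_add_distrib]
      apply Finset.sum_le_sum
      intro x _
      omega
    have h4 : gl s ≤ gl r := by
      rw [hgl]
      exact Finset.sum_le_sum_of_subset (Finset.Ioc_subset_Ioc le_rfl hsr)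
    have hds := hd s
    obtain ⟨E, hE⟩ : ∃ E, s * c = E := ⟨_, rfl⟩
    rw [hE] at h2 h3
    omega
  refine ⟨?_, ?_, ?_, ?_⟩
  · -- leftPart dominance
    intro k r hk1 hk2
    rcases eq_or_lt_of_le hk1 with hk | hk
    · -- k = 1
      rw [← hk]
      rw [show Finset.Icc 1 (1-1) = ∅ from by rfl, Finset.sum_empty, hIcc r]
      have h1 : ∑ r' ∈ Finset.Ioc 0 r, leftPart mu c m 1 r' = fm r := by
        simp only [hfm]; exact Finset.sum_congr rfl (fun x _ => by simp [leftPart])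
      have h2 : ∑ r' ∈ Finset.Ioc 0 r, leftPart lam c m 1 r' = fl r := by
        simp only [hfl]; exact Finset.sum_congr rfl (fun x _ => by simp [leftPart])
      rw [h1, h2]
      simpa using key1 r
    · -- 2 ≤ k
      have hk2' : 2 ≤ k := hk
      set M := m + k - 1 with hM
      have hM1 : m + 1 ≤ M := by omega
      have hM2 : M ≤ l := by omega
      -- expand prefix sums
      rw [hIcc (k-1), hIcc r,
          leftPart_prefix n m c hm1 mu (k-1) (by omega),
          leftPart_prefix n m c hm1 lam (k-1) (by omega),
          show m + (k-1) - 1 = M - 1 from by omega]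
      have hrowm : ∑ r' ∈ Finset.Ioc 0 r, leftPart mu c m k r' =
          ∑ r' ∈ Finset.Ioc 0 r, mu M r' := by
        apply Finset.sum_congr rfl
        intro x _
        simp [leftPart, show ¬ k = 0 by omega, show ¬ k = 1 by omega, hM]
      have hrowl : ∑ r' ∈ Finset.Ioc 0 r, leftPart lam c m k r' =
          ∑ r' ∈ Finset.Ioc 0 r, lam M r' := by
        apply Finset.sum_congr rfl
        intro x _
        simp [leftPart, show ¬ k = 0 by omega, show ¬ k = 1 by omega, hM]
      rw [hrowm, hrowl]
      -- full dominance at (M, r)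
      have hD := hdom M r (by omega) hM2
      rw [hIcc (M-1), hIcc r, sum_split_three (compSize n mu) hm1 (by omega),
          sum_split_three (compSize n lam) hm1 (by omega)] at hD
      have e1 : ∑ m' ∈ Finset.Ioc 0 (m-1), compSize n mu m' = Cm := by
        rw [hCm, hIcc (m-1)]
      have e2 : ∑ m' ∈ Finset.Ioc 0 (m-1), compSize n lam m' = Cl := by
        rw [hCl, hIcc (m-1)]
      have e3 : compSize n mu m = fm n + gm n := by rw [← hqn, hfgm n]
      have e4 : compSize n lam m = fl n + gl n := by rw [← hpn, hfgl n]
      rw [e1, e2, e3, e4] at hD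
      have h0 : fm n + (∑ r ∈ Finset.Ioc 0 n, min (mu m r) c) = fm n + fm n := by rw [hfm]
      have h0' : fl n + (∑ r ∈ Finset.Ioc 0 n, min (lam m r) c) = fl n + fl n := by rw [hfl]
      omega
  · -- rightPart dominance
    intro k r hk1 hk2
    have hcomp : ∀ (ν : ℕ → ℕ → ℕ) (j : ℕ), j < m →
        (∑ k' ∈ Finset.Icc 1 (j-1), compSize n (rightPart ν c m) k') =
          ∑ k' ∈ Finset.Icc 1 (j-1), compSize n ν k' := by
      intro ν j hj
      apply Finset.sum_congr rfl
      intro k' hk'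
      have hk'' := Finset.mem_Icc.1 hk'
      unfold compSize
      apply Finset.sum_congr rfl
      intro x _
      simp [rightPart, show k' < m by omega]
    rcases lt_or_eq_of_le hk2 with hk | hk
    · -- k < m
      have hD := hdom k r hk1 (le_trans hk2 hm2)
      rw [hcomp mu k hk, hcomp lam k hk]
      have hrm : ∑ r' ∈ Finset.Icc 1 r, rightPart mu c m k r' = ∑ r' ∈ Finset.Icc 1 r, mu k r' :=
        Finset.sum_congr rfl (fun x _ => by simp [rightPart, hk])
      have hrl : ∑ r' ∈ Finset.Icc 1 r, rightPart lam c m k r' = ∑ r' ∈ Finset.Icc 1 r, lam k r' :=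
        Finset.sum_congr rfl (fun x _ => by simp [rightPart, hk])
      rw [hrm, hrl]
      exact hD
    · -- k = m
      subst hk
      have hcm : (∑ k' ∈ Finset.Icc 1 (k-1), compSize n (rightPart mu c k) k') = Cm := by
        rw [hCm]
        apply Finset.sum_congr rfl
        intro k' hk'
        have hk'' := Finset.mem_Icc.1 hk'
        unfold compSize
        exact Finset.sum_congr rfl (fun x _ => by simp [rightPart, show k' < k by omega])
      have hcl : (∑ k' ∈ Finset.Icc 1 (k-1), compSize n (rightPart lam c k) k') = Cl := by
        rw [hCl]
        apply Finset.sum_congr rfl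
        intro k' hk'
        have hk'' := Finset.mem_Icc.1 hk'
        unfold compSize
        exact Finset.sum_congr rfl (fun x _ => by simp [rightPart, show k' < k by omega])
      rw [hcm, hcl, hIcc r]
      have hrm : ∑ r' ∈ Finset.Ioc 0 r, rightPart mu c k k r' = gm r := by
        simp only [hgm]
        exact Finset.sum_congr rfl (fun x _ => by simp [rightPart])
      have hrl : ∑ r' ∈ Finset.Ioc 0 r, rightPart lam c k k r' = gl r := by
        simp only [hgl]
        exact Finset.sum_congr rfl (fun x _ => by simp [rightPart])
      rw [hrm, hrl]
      exact key2 r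
  · -- colLen mu (c+1) ≤ colLen mu c
    apply Finset.card_le_card
    intro x hx
    simp only [Finset.mem_filter, Finset.mem_Icc] at hx ⊢
    exact ⟨hx.1, by omega⟩
  · -- colLen mu c ≤ colLen lam c
    by_contra hcon
    push_neg at hcon
    set a := colLen n lam m c with ha
    set t := colLen n mu m c with htdef
    have hat : a < t := hcon
    have htn : t ≤ n := hmle
    have han : a ≤ n := hlle
    -- e1 : fl n + p a = a * c + p n
    have e1 : fl n + p a = a * c + p n := by
      have hs1 : fl n = (∑ r' ∈ Finset.Ioc 0 a, min (lam m r') c) +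
          ∑ r' ∈ Finset.Ioc a n, min (lam m r') c := by
        simp only [hfl]; exact Ioc_split _ (Nat.zero_le a) han
      have hs2 : ∑ r' ∈ Finset.Ioc 0 a, min (lam m r') c = a * c := by
        have hterm : ∀ x ∈ Finset.Ioc 0 a, min (lam m x) c = c := by
          intro x hx
          have hx' := Finset.mem_Ioc.1 hx
          exact min_eq_right (hlmem x (by omega) hx'.2)
        rw [Finset.sum_congr rfl hterm, Finset.sum_const, Nat.card_Ioc, Nat.sub_zero,
            smul_eq_mul]
      have hs3 : ∑ r' ∈ Finset.Ioc a n, min (lam m r') c = ∑ r' ∈ Finset.Ioc a n, lam m r' := by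
        apply Finset.sum_congr rfl
        intro x hx
        have hx' := Finset.mem_Ioc.1 hx
        exact min_eq_left (le_of_lt (hlnot x hx'.1 hx'.2))
      have hs4 : p a + ∑ r' ∈ Finset.Ioc a n, lam m r' = p n := by
        simp only [hP]; exact (Ioc_split _ (Nat.zero_le a) han).symm
      omega
    have e2 : fm n + q t = t * c + q n := by
      have hs1 : fm n = (∑ r' ∈ Finset.Ioc 0 t, min (mu m r') c) +
          ∑ r' ∈ Finset.Ioc t n, min (mu m r') c := by
        simp only [hfm]; exact Ioc_split _ (Nat.zero_le t) htn
      have hs2 : ∑ r' ∈ Finset.Ioc 0 t, min (mu m r') c = t * c := by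
        have hterm : ∀ x ∈ Finset.Ioc 0 t, min (mu m x) c = c := by
          intro x hx
          have hx' := Finset.mem_Ioc.1 hx
          exact min_eq_right (hmmem x (by omega) hx'.2)
        rw [Finset.sum_congr rfl hterm, Finset.sum_const, Nat.card_Ioc, Nat.sub_zero,
            smul_eq_mul]
      have hs3 : ∑ r' ∈ Finset.Ioc t n, min (mu m r') c = ∑ r' ∈ Finset.Ioc t n, mu m r' := by
        apply Finset.sum_congr rfl
        intro x hx
        have hx' := Finset.mem_Ioc.1 hx
        exact min_eq_left (le_of_lt (hmnot x hx'.1 hx'.2))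
      have hs4 : q t + ∑ r' ∈ Finset.Ioc t n, mu m r' = q n := by
        simp only [hQ]; exact (Ioc_split _ (Nat.zero_le t) htn).symm
      omega
    -- e3 : p t = p a + D
    have e3 : p t = p a + ∑ r' ∈ Finset.Ioc a t, lam m r' := by
      simp only [hP]; exact Ioc_split _ (Nat.zero_le a) (le_of_lt hat)
    -- e4 : D + (t - a) ≤ (t - a) * c
    have e4 : (∑ r' ∈ Finset.Ioc a t, lam m r') + (t - a) ≤ (t - a) * c := by
      have h0 : ∑ r' ∈ Finset.Ioc a t, (lam m r' + 1) ≤ ∑ _r' ∈ Finset.Ioc a t, c := by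
        apply Finset.sum_le_sum
        intro x hx
        have hx' := Finset.mem_Ioc.1 hx
        have := hlnot x (by omega) (by omega)
        omega
      rw [Finset.sum_add_distrib, Finset.sum_const, Finset.sum_const, Nat.card_Ioc,
          smul_eq_mul, smul_eq_mul, mul_one] at h0
      exact h0
    have ep : t * c = a * c + (t - a) * c := by
      have h0 : a + (t - a) = t := by omega
      calc t * c = (a + (t - a)) * c := by rw [h0]
        _ = a * c + (t - a) * c := Nat.add_mul _ _ _
    have hdt := hd t
    obtain ⟨X, hX⟩ : ∃ X, a * c = X := ⟨_, rfl⟩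
    obtain ⟨Y, hY⟩ : ∃ Y, (t - a) * c = Y := ⟨_, rfl⟩
    rw [hX] at e1 ep
    rw [hY] at e4 ep
    rw [ep] at e2
    omega


end FS
end

section
/- Let λ, μ ∈ 𝒫^l_n and 1 ≤ m ≤ l with λ^(m+1) = ⋯ = λ^(l) = μ^(m+1) = ⋯ = μ^(l) = ∅ and k := (λ^(m))'_1 = (μ^(m))'_1 (the components m of λ and μ have first columns of the same length k). For t ∈ Std(μ_R(1,m)) let t⁺ denote the μ-tableau obtained from t by increasing every entry by k, adjoining a new first column to component m containing the entries 1,…,k in order from top to bottom, and adjoining empty components m+1,…,l. Then Std_λ(μ) = { t⁺ : t ∈ Std_{λ_R(1,m)}(μ_R(1,m)) }; in particular every λ-column-dominated standard μ-tableau has the entries 1,…,k in order down the first column of its m-th component. -/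
namespace FS

open scoped Classical

/-! ### Auxiliary lemmas for Statement 16 -/

/-- Shift a node: in component `m`, move one column to the right. -/
def shiftNode (m : ℕ) (A : Node) : Node :=
  if A.2.2 = m then (A.1, A.2.1 + 1, A.2.2) else A

lemma rightPart_lt {p : ℕ → ℕ → ℕ} {m m' : ℕ} (r : ℕ) (h : m' < m) :
    rightPart p 1 m m' r = p m' r := by
  unfold rightPart
  rw [if_pos h]

lemma rightPart_eq (p : ℕ → ℕ → ℕ) (m r : ℕ) :
    rightPart p 1 m m r = p m r - 1 := by
  unfold rightPart
  rw [if_neg (lt_irrefl m), if_pos rfl]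

lemma rightPart_gt {p : ℕ → ℕ → ℕ} {m m' : ℕ} (r : ℕ) (h1 : ¬ m' < m) (h2 : m' ≠ m) :
    rightPart p 1 m m' r = 0 := by
  unfold rightPart
  rw [if_neg h1, if_neg h2]

lemma shiftNode_eq {m : ℕ} {A : Node} (h : A.2.2 = m) :
    shiftNode m A = (A.1, A.2.1 + 1, A.2.2) := by
  unfold shiftNode
  rw [if_pos h]

lemma shiftNode_ne {m : ℕ} {A : Node} (h : ¬ A.2.2 = m) : shiftNode m A = A := by
  unfold shiftNode
  rw [if_neg h]

lemma addFirstCol_col1 {k m : ℕ} {t : Node → ℕ} {A : Node} (h1 : A.2.2 = m) (h2 : A.2.1 = 1) :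
    addFirstCol k m t A = A.1 := by
  unfold addFirstCol
  rw [if_pos h1, if_pos h2]

lemma addFirstCol_m {k m : ℕ} {t : Node → ℕ} {A : Node} (h1 : A.2.2 = m) (h2 : ¬ A.2.1 = 1) :
    addFirstCol k m t A = k + t (A.1, A.2.1 - 1, m) := by
  unfold addFirstCol
  rw [if_pos h1, if_neg h2]

lemma addFirstCol_ne {k m : ℕ} {t : Node → ℕ} {A : Node} (h1 : ¬ A.2.2 = m) :
    addFirstCol k m t A = k + t A := by
  unfold addFirstCol
  rw [if_neg h1]

lemma shift_inj (m : ℕ) {A B : Node} (h : shiftNode m A = shiftNode m B) : A = B := by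
  obtain ⟨a1, a2, a3⟩ := A; obtain ⟨b1, b2, b3⟩ := B
  unfold shiftNode at h
  by_cases h1 : a3 = m <;> by_cases h2 : b3 = m <;>
    simp_all [Prod.mk.injEq] <;> omega

lemma weaklyLeft_shift_iff (m : ℕ) (A B : Node) :
    WeaklyLeft (shiftNode m A) (shiftNode m B) ↔ WeaklyLeft A B := by
  obtain ⟨a1, a2, a3⟩ := A; obtain ⟨b1, b2, b3⟩ := B
  by_cases h1 : a3 = m <;> by_cases h2 : b3 = m <;>
    simp [shiftNode, WeaklyLeft, h1, h2] <;> omega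

section Helpers

variable {l n : ℕ} {p : ℕ → ℕ → ℕ}

lemma anti_of (hp : IsMP l n p) (m : ℕ) : ∀ {r r' : ℕ}, 1 ≤ r → r ≤ r' → p m r' ≤ p m r := by
  intro r r' h1 h2
  induction r', h2 using Nat.le_induction with
  | base => exact le_rfl
  | succ x hx ih => exact le_trans (hp.2.1 m x (le_trans h1 hx)) ih

lemma le_iff_le_colLen (hp : IsMP l n p) (m : ℕ) {c : ℕ} (hc : 1 ≤ c) (r : ℕ) :
    c ≤ p m r ↔ 1 ≤ r ∧ r ≤ colLen n p m c := by
  constructor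
  · intro h
    have hr1 : 1 ≤ r := by
      by_contra h0
      have := hp.1 m r (by omega)
      omega
    have hrn : r ≤ n := by
      by_contra h0
      have := hp.1 m r (by omega)
      omega
    refine ⟨hr1, ?_⟩
    have hsub : Finset.Icc 1 r ⊆ (Finset.Icc 1 n).filter (fun x => c ≤ p m x) := by
      intro x hx
      simp only [Finset.mem_Icc, Finset.mem_filter] at *
      exact ⟨⟨hx.1, hx.2.trans hrn⟩, h.trans (anti_of hp m hx.1 hx.2)⟩
    have hcard := Finset.card_le_card hsub
    rw [Nat.card_Icc] at hcard
    unfold colLen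
    omega
  · rintro ⟨hr1, hrk⟩
    by_contra h
    push_neg at h
    have hsub : (Finset.Icc 1 n).filter (fun x => c ≤ p m x) ⊆ Finset.Ico 1 r := by
      intro x hx
      simp only [Finset.mem_Icc, Finset.mem_filter, Finset.mem_Ico] at *
      refine ⟨hx.1.1, ?_⟩
      by_contra hxr
      push_neg at hxr
      have := anti_of hp m hr1 hxr
      omega
    have hcard := Finset.card_le_card hsub
    rw [Nat.card_Ico] at hcard
    unfold colLen at hrk
    omega

lemma colLen_le_n (p : ℕ → ℕ → ℕ) (m c : ℕ) : colLen n p m c ≤ n := by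
  unfold colLen
  calc ((Finset.Icc 1 n).filter fun r => c ≤ p m r).card ≤ (Finset.Icc 1 n).card :=
        Finset.card_filter_le _ _
    _ = n := by rw [Nat.card_Icc]; omega

lemma colLen_le_compSize (hp : IsMP l n p) (m : ℕ) {c : ℕ} (hc : 1 ≤ c) :
    colLen n p m c ≤ compSize n p m := by
  unfold colLen compSize
  calc ((Finset.Icc 1 n).filter fun r => c ≤ p m r).card
      = ∑ r ∈ (Finset.Icc 1 n).filter (fun r => c ≤ p m r), 1 := by simp
    _ ≤ ∑ r ∈ (Finset.Icc 1 n).filter (fun r => c ≤ p m r), p m r :=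
        Finset.sum_le_sum (fun x hx => by
          simp only [Finset.mem_filter] at hx; omega)
    _ ≤ ∑ r ∈ Finset.Icc 1 n, p m r :=
        Finset.sum_le_sum_of_subset (Finset.filter_subset _ _)

lemma sum_compSize_le (hp : IsMP l n p) {S : Finset ℕ} (hS : S ⊆ Finset.Icc 1 l) :
    ∑ m' ∈ S, compSize n p m' ≤ n := by
  calc ∑ m' ∈ S, compSize n p m' ≤ ∑ m' ∈ Finset.Icc 1 l, compSize n p m' :=
      Finset.sum_le_sum_of_subset hS
    _ = n := hp.2.2

lemma compSize_le (hp : IsMP l n p) {m : ℕ} (hm1 : 1 ≤ m) (hm2 : m ≤ l) :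
    compSize n p m ≤ n := by
  have hsub : ({m} : Finset ℕ) ⊆ Finset.Icc 1 l := by
    intro x hx
    simp only [Finset.mem_singleton] at hx
    subst hx
    simp only [Finset.mem_Icc]
    omega
  have := sum_compSize_le hp hsub
  rwa [Finset.sum_singleton] at this

lemma vanish_ne (hp : IsMP l n p) (m : ℕ) (hm1 : 1 ≤ m) (hm2 : m ≤ l)
    {m' : ℕ} (hne : m' ≠ m) {r : ℕ} (hr : n - colLen n p m 1 < r) : p m' r = 0 := by
  by_contra hcon
  have h1 : 1 ≤ p m' r := Nat.pos_of_ne_zero hcon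
  have hm'1 : 1 ≤ m' := by
    by_contra h
    have := hp.1 m' r (by omega)
    omega
  have hm'l : m' ≤ l := by
    by_contra h
    have := hp.1 m' r (by omega)
    omega
  have h2 : r ≤ colLen n p m' 1 := ((le_iff_le_colLen hp m' le_rfl r).1 h1).2
  have h3 : colLen n p m' 1 ≤ compSize n p m' := colLen_le_compSize hp m' le_rfl
  have h4 : colLen n p m 1 ≤ compSize n p m := colLen_le_compSize hp m le_rfl
  have h5 : compSize n p m' + compSize n p m ≤ n := by
    have hsub : ({m', m} : Finset ℕ) ⊆ Finset.Icc 1 l := by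
      intro x hx
      simp only [Finset.mem_insert, Finset.mem_singleton] at hx
      rcases hx with h | h <;> subst h <;> simp only [Finset.mem_Icc] <;> omega
    have := sum_compSize_le hp hsub
    rwa [Finset.sum_pair hne] at this
  omega

lemma vanish_m (hp : IsMP l n p) (m : ℕ) (hm1 : 1 ≤ m) (hm2 : m ≤ l)
    {r : ℕ} (hr : n - colLen n p m 1 < r) : p m r ≤ 1 := by
  by_contra hcon
  push_neg at hcon
  have hrn : r ≤ n := by
    by_contra h
    have := hp.1 m r (by omega)
    omega
  have hr1 : 1 ≤ r := by
    by_contra h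
    have := hp.1 m r (by omega)
    omega
  have hKn : colLen n p m 1 ≤ n := colLen_le_n p m 1
  obtain ⟨j, hrj, hKj, hjn, hjm⟩ :
      ∃ j, r ≤ j ∧ colLen n p m 1 ≤ j ∧ j ≤ n ∧ (j ≤ r ∨ j ≤ colLen n p m 1) :=
    ⟨max r (colLen n p m 1), le_max_left _ _, le_max_right _ _, by omega, by omega⟩
  have hsum : ∀ x ∈ Finset.Icc 1 j, (if x ≤ r then 2 else 1) ≤ p m x := by
    intro x hx
    simp only [Finset.mem_Icc] at hx
    by_cases hxr : x ≤ r
    · simp only [if_pos hxr]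
      have := anti_of hp m hx.1 hxr
      omega
    · simp only [if_neg hxr]
      exact (le_iff_le_colLen hp m le_rfl x).2 ⟨hx.1, by omega⟩
  have h5 := Finset.sum_le_sum hsum
  have h6 : ∑ x ∈ Finset.Icc 1 j, p m x ≤ compSize n p m :=
    Finset.sum_le_sum_of_subset (Finset.Icc_subset_Icc_right hjn)
  have h7 : compSize n p m ≤ n := compSize_le hp hm1 hm2
  have h8 : ∑ x ∈ Finset.Icc 1 j, (if x ≤ r then 2 else 1)
      = (∑ x ∈ Finset.Icc 1 j, (if x ≤ r then 1 else 0)) + ∑ x ∈ Finset.Icc 1 j, 1 := by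
    rw [← Finset.sum_add_distrib]
    exact Finset.sum_congr rfl fun x _ => by by_cases h : x ≤ r <;> simp [h]
  have h9 : ∑ x ∈ Finset.Icc 1 j, (if x ≤ r then 1 else 0) = r := by
    rw [← Finset.card_filter]
    have : (Finset.Icc 1 j).filter (fun x => x ≤ r) = Finset.Icc 1 r := by
      ext x
      simp only [Finset.mem_filter, Finset.mem_Icc]
      omega
    rw [this, Nat.card_Icc]
    omega
  have h10 : ∑ x ∈ Finset.Icc 1 j, (1 : ℕ) = j := by
    rw [Finset.sum_const, smul_eq_mul, mul_one, Nat.card_Icc]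
    omega
  have hfin : r + j ≤ n := by
    calc r + j = (∑ x ∈ Finset.Icc 1 j, (if x ≤ r then 1 else 0)) + ∑ x ∈ Finset.Icc 1 j, 1 := by
          rw [h9, h10]
      _ = ∑ x ∈ Finset.Icc 1 j, (if x ≤ r then 2 else 1) := h8.symm
      _ ≤ ∑ x ∈ Finset.Icc 1 j, p m x := h5
      _ ≤ compSize n p m := h6
      _ ≤ n := h7
  omega

lemma diag_facts {m : ℕ} (hp : IsMP l n p) (hp0 : ∀ j r, m < j → p j r = 0)
    {A : Node} (hA : InDiag p A) :
    1 ≤ A.2.2 ∧ A.2.2 ≤ m ∧ 1 ≤ A.1 ∧ A.1 ≤ n ∧ 1 ≤ A.2.1 := by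
  obtain ⟨h1, h2⟩ := hA
  have hpos : 1 ≤ p A.2.2 A.1 := le_trans h1 h2
  have h3 : ¬(A.2.2 = 0 ∨ l < A.2.2 ∨ A.1 = 0 ∨ n < A.1) := by
    intro hc
    have := hp.1 A.2.2 A.1 hc
    omega
  have h4 : ¬ m < A.2.2 := by
    intro hc
    have := hp0 A.2.2 A.1 hc
    omega
  omega

lemma diag_facts_right {m : ℕ} (hp : IsMP l n p) (hp0 : ∀ j r, m < j → p j r = 0)
    (hm1 : 1 ≤ m) {A : Node} (hA : InDiag (rightPart p 1 m) A) :
    1 ≤ A.2.2 ∧ A.2.2 ≤ m ∧ 1 ≤ A.1 ∧ A.1 ≤ n ∧ 1 ≤ A.2.1 := by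
  obtain ⟨r, c, mc⟩ := A
  have hA' : 1 ≤ c ∧ c ≤ rightPart p 1 m mc r := hA
  show 1 ≤ mc ∧ mc ≤ m ∧ 1 ≤ r ∧ r ≤ n ∧ 1 ≤ c
  obtain ⟨h1, h2⟩ := hA'
  by_cases hc : mc < m
  · rw [rightPart_lt r hc] at h2
    have hf : 1 ≤ mc ∧ mc ≤ m ∧ 1 ≤ r ∧ r ≤ n ∧ 1 ≤ c :=
      diag_facts hp hp0 (A := (r, c, mc)) ⟨h1, h2⟩
    omega
  · by_cases hc2 : mc = m
    · rw [hc2, rightPart_eq] at h2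
      have hd : InDiag p (r, c, m) := ⟨h1, by show c ≤ p m r; omega⟩
      have hf : 1 ≤ m ∧ m ≤ m ∧ 1 ≤ r ∧ r ≤ n ∧ 1 ≤ c := diag_facts hp hp0 hd
      omega
    · rw [rightPart_gt r hc hc2] at h2
      omega

lemma shift_diag {m : ℕ} (hp : IsMP l n p) (hp0 : ∀ j r, m < j → p j r = 0)
    (hm1 : 1 ≤ m) {A : Node} (hA : InDiag (rightPart p 1 m) A) :
    InDiag p (shiftNode m A) ∧ ¬((shiftNode m A).2.2 = m ∧ (shiftNode m A).2.1 = 1) := by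
  obtain ⟨r, c, mc⟩ := A
  have hf : 1 ≤ mc ∧ mc ≤ m ∧ 1 ≤ r ∧ r ≤ n ∧ 1 ≤ c := diag_facts_right hp hp0 hm1 hA
  have hA' : 1 ≤ c ∧ c ≤ rightPart p 1 m mc r := hA
  obtain ⟨h1, h2⟩ := hA'
  by_cases hmc : mc = m
  · rw [hmc, rightPart_eq] at h2
    rw [shiftNode_eq (show ((r, c, mc) : Node).2.2 = m from hmc)]
    constructor
    · refine ⟨?_, ?_⟩
      · show 1 ≤ c + 1
        omega
      · show c + 1 ≤ p mc r
        rw [hmc]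
        omega
    · show ¬(mc = m ∧ c + 1 = 1)
      omega
  · have hlt : mc < m := by omega
    rw [rightPart_lt r hlt] at h2
    rw [shiftNode_ne (show ¬ ((r, c, mc) : Node).2.2 = m from hmc)]
    exact ⟨⟨h1, h2⟩, by show ¬(mc = m ∧ c = 1); omega⟩

lemma unshift_diag {m : ℕ} (hp : IsMP l n p) (hp0 : ∀ j r, m < j → p j r = 0)
    (hm1 : 1 ≤ m) {A : Node} (hA : InDiag p A) (hnot : ¬(A.2.2 = m ∧ A.2.1 = 1)) :
    ∃ A', InDiag (rightPart p 1 m) A' ∧ shiftNode m A' = A := by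
  obtain ⟨r, c, mc⟩ := A
  have hf : 1 ≤ mc ∧ mc ≤ m ∧ 1 ≤ r ∧ r ≤ n ∧ 1 ≤ c := diag_facts hp hp0 hA
  have hnot' : ¬(mc = m ∧ c = 1) := hnot
  have hA' : 1 ≤ c ∧ c ≤ p mc r := hA
  obtain ⟨h1, h2⟩ := hA'
  by_cases hmc : mc = m
  · have hc2 : 2 ≤ c := by omega
    refine ⟨(r, c - 1, mc), ⟨?_, ?_⟩, ?_⟩
    · show 1 ≤ c - 1
      omega
    · show c - 1 ≤ rightPart p 1 m mc r
      rw [hmc] at h2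
      rw [hmc, rightPart_eq]
      omega
    · rw [shiftNode_eq (show ((r, c - 1, mc) : Node).2.2 = m from hmc)]
      show (r, c - 1 + 1, mc) = ((r, c, mc) : Node)
      rw [Prod.mk.injEq, Prod.mk.injEq]
      refine ⟨rfl, by omega, rfl⟩
  · have hlt : mc < m := by omega
    refine ⟨(r, c, mc), ⟨h1, ?_⟩, ?_⟩
    · show c ≤ rightPart p 1 m mc r
      rw [rightPart_lt r hlt]
      exact h2
    · exact shiftNode_ne (show ¬ ((r, c, mc) : Node).2.2 = m from hmc)

lemma first_col_mem (hp : IsMP l n p) (m : ℕ) (r : ℕ) :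
    InDiag p (r, 1, m) ↔ 1 ≤ r ∧ r ≤ colLen n p m 1 := by
  constructor
  · intro h
    exact (le_iff_le_colLen hp m le_rfl r).1 h.2
  · intro h
    exact ⟨le_rfl, (le_iff_le_colLen hp m le_rfl r).2 h⟩


lemma comp_right_lt (hp : IsMP l n p) (m : ℕ) (hm1 : 1 ≤ m) (hm2 : m ≤ l)
    (k : ℕ) (hk : k = colLen n p m 1) {m' : ℕ} (hlt : m' < m) :
    compSize (n - k) (rightPart p 1 m) m' = compSize n p m' := by
  subst hk
  unfold compSize
  calc ∑ rr ∈ Finset.Icc 1 (n - colLen n p m 1), rightPart p 1 m m' rr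
      = ∑ rr ∈ Finset.Icc 1 (n - colLen n p m 1), p m' rr :=
        Finset.sum_congr rfl fun x _ => rightPart_lt x hlt
    _ = ∑ rr ∈ Finset.Icc 1 n, p m' rr := by
        apply Finset.sum_subset (Finset.Icc_subset_Icc_right (Nat.sub_le n _))
        intro x hx hnx
        simp only [Finset.mem_Icc] at hx hnx
        exact vanish_ne hp m hm1 hm2 (by omega) (by omega)

lemma comp_right_m (hp : IsMP l n p) (m : ℕ) (hm1 : 1 ≤ m) (hm2 : m ≤ l)
    (k : ℕ) (hk : k = colLen n p m 1) :
    compSize (n - k) (rightPart p 1 m) m + k = compSize n p m := by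
  subst hk
  unfold compSize
  rw [Finset.sum_congr rfl fun x _ => rightPart_eq p m x]
  have e1 : ∑ x ∈ Finset.Icc 1 (n - colLen n p m 1), (p m x - 1)
      = ∑ x ∈ Finset.Icc 1 n, (p m x - 1) := by
    apply Finset.sum_subset (Finset.Icc_subset_Icc_right (Nat.sub_le n _))
    intro x hx hnx
    simp only [Finset.mem_Icc] at hx hnx
    have := vanish_m hp m hm1 hm2 (r := x) (by omega)
    omega
  rw [e1]
  have e2 : colLen n p m 1 = ∑ x ∈ Finset.Icc 1 n, (if 1 ≤ p m x then 1 else 0) := by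
    unfold colLen
    rw [Finset.card_filter]
  rw [e2, ← Finset.sum_add_distrib]
  refine Finset.sum_congr rfl fun x _ => ?_
  by_cases h : 1 ≤ p m x <;> simp [h] <;> omega

lemma colLen_right_lt (hp : IsMP l n p) (m : ℕ) (hm1 : 1 ≤ m) (hm2 : m ≤ l)
    (k : ℕ) (hk : k = colLen n p m 1) {m' c : ℕ} (hlt : m' < m) (hc : 1 ≤ c) :
    colLen (n - k) (rightPart p 1 m) m' c = colLen n p m' c := by
  subst hk
  have hset : (Finset.Icc 1 (n - colLen n p m 1)).filter (fun r => c ≤ rightPart p 1 m m' r)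
      = (Finset.Icc 1 n).filter (fun r => c ≤ p m' r) := by
    ext x
    simp only [Finset.mem_filter, Finset.mem_Icc, rightPart_lt x hlt]
    constructor
    · rintro ⟨⟨ha, hb⟩, hc'⟩
      exact ⟨⟨ha, by omega⟩, hc'⟩
    · rintro ⟨⟨ha, hb⟩, hc'⟩
      refine ⟨⟨ha, ?_⟩, hc'⟩
      by_contra hcon
      have := vanish_ne hp m hm1 hm2 (show m' ≠ m by omega) (r := x) (by omega)
      omega
  exact congrArg Finset.card hset

lemma colLen_right_m (hp : IsMP l n p) (m : ℕ) (hm1 : 1 ≤ m) (hm2 : m ≤ l)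
    (k : ℕ) (hk : k = colLen n p m 1) {c : ℕ} (hc : 1 ≤ c) :
    colLen (n - k) (rightPart p 1 m) m c = colLen n p m (c + 1) := by
  subst hk
  have hset : (Finset.Icc 1 (n - colLen n p m 1)).filter (fun r => c ≤ rightPart p 1 m m r)
      = (Finset.Icc 1 n).filter (fun r => c + 1 ≤ p m r) := by
    ext x
    simp only [Finset.mem_filter, Finset.mem_Icc, rightPart_eq p m x]
    constructor
    · rintro ⟨⟨ha, hb⟩, hc'⟩
      exact ⟨⟨ha, by omega⟩, by omega⟩
    · rintro ⟨⟨ha, hb⟩, hc'⟩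
      have hx : x ≤ n - colLen n p m 1 := by
        by_contra hcon
        have := vanish_m hp m hm1 hm2 (r := x) (by omega)
        omega
      exact ⟨⟨ha, hx⟩, by omega⟩
  exact congrArg Finset.card hset

lemma sum_comps_above (m : ℕ) (hp0 : ∀ j r, m < j → p j r = 0) (a : ℕ) :
    ∑ m'' ∈ Finset.Icc (m + 1) a, compSize n p m'' = 0 :=
  Finset.sum_eq_zero fun x hx => by
    unfold compSize
    exact Finset.sum_eq_zero fun rr _ => hp0 x rr (by
      have := (Finset.mem_Icc.mp hx).1
      omega)

lemma colTab_first_col (l : ℕ) (m : ℕ) (hp0 : ∀ j r, m < j → p j r = 0) (r : ℕ) :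
    colTab l n p (r, 1, m) = r := by
  show (∑ m' ∈ Finset.Icc (m + 1) l, compSize n p m')
      + (∑ c' ∈ Finset.Icc 1 (1 - 1), colLen n p m c') + r = r
  rw [sum_comps_above m hp0 l,
    show Finset.Icc 1 (1 - 1) = (∅ : Finset ℕ) from Finset.Icc_eq_empty (by omega),
    Finset.sum_empty]
  omega

lemma colTab_low (l : ℕ) (m : ℕ) (hm1 : 1 ≤ m) (hm2 : m ≤ l) (hp : IsMP l n p)
    (hp0 : ∀ j r, m < j → p j r = 0) (k : ℕ) (hk : k = colLen n p m 1)
    {B : Node} (hB : InDiag p B) (hle : colTab l n p B ≤ k) :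
    B.2.2 = m ∧ B.2.1 = 1 ∧ B.1 = colTab l n p B := by
  obtain ⟨r, c, mc⟩ := B
  have hf : 1 ≤ mc ∧ mc ≤ m ∧ 1 ≤ r ∧ r ≤ n ∧ 1 ≤ c := diag_facts hp hp0 hB
  have hkc : k ≤ compSize n p m := by
    rw [hk]
    exact colLen_le_compSize hp m le_rfl
  have hct : colTab l n p (r, c, mc)
      = (∑ m' ∈ Finset.Icc (mc + 1) l, compSize n p m')
        + (∑ c' ∈ Finset.Icc 1 (c - 1), colLen n p mc c') + r := rfl
  have hmc : mc = m := by
    by_contra hne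
    have hlt : mc < m := by omega
    have hmem : m ∈ Finset.Icc (mc + 1) l := Finset.mem_Icc.mpr ⟨by omega, hm2⟩
    have hone : compSize n p m ≤ ∑ m'' ∈ Finset.Icc (mc + 1) l, compSize n p m'' :=
      Finset.single_le_sum (fun i _ => Nat.zero_le _) hmem
    rw [hct] at hle
    omega
  subst hmc
  have hcc : c = 1 := by
    by_contra hne
    have hmem : 1 ∈ Finset.Icc 1 (c - 1) := Finset.mem_Icc.mpr ⟨le_rfl, by omega⟩
    have hone : colLen n p mc 1 ≤ ∑ c' ∈ Finset.Icc 1 (c - 1), colLen n p mc c' :=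
      Finset.single_le_sum (fun i _ => Nat.zero_le _) hmem
    rw [hct] at hle
    omega
  subst hcc
  refine ⟨rfl, rfl, ?_⟩
  show r = colTab l n p (r, 1, mc)
  rw [colTab_first_col l mc hp0 r]

lemma colTab_right_m (hp : IsMP l n p) (m : ℕ) (hm1 : 1 ≤ m) (hm2 : m ≤ l)
    (hp0 : ∀ j r, m < j → p j r = 0) (k : ℕ) (hk : k = colLen n p m 1)
    (r c : ℕ) (hc : 1 ≤ c) :
    colTab m (n - k) (rightPart p 1 m) (r, c, m) + k = colTab l n p (r, c + 1, m) := by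
  show (∑ m' ∈ Finset.Icc (m + 1) m, compSize (n - k) (rightPart p 1 m) m')
      + (∑ c' ∈ Finset.Icc 1 (c - 1), colLen (n - k) (rightPart p 1 m) m c') + r + k
      = (∑ m' ∈ Finset.Icc (m + 1) l, compSize n p m')
      + (∑ c' ∈ Finset.Icc 1 (c + 1 - 1), colLen n p m c') + r
  rw [show Finset.Icc (m + 1) m = (∅ : Finset ℕ) from Finset.Icc_eq_empty (by omega),
    Finset.sum_empty, sum_comps_above m hp0 l]
  have e1 : ∑ c' ∈ Finset.Icc 1 (c - 1), colLen (n - k) (rightPart p 1 m) m c'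
      = ∑ c' ∈ Finset.Icc 1 (c - 1), colLen n p m (c' + 1) :=
    Finset.sum_congr rfl fun x hx => colLen_right_m hp m hm1 hm2 k hk (Finset.mem_Icc.mp hx).1
  rw [e1, show c + 1 - 1 = c from by omega]
  have e3 : ∑ c' ∈ Finset.Icc 1 c, colLen n p m c'
      = colLen n p m 1 + ∑ x ∈ Finset.Icc 1 (c - 1), colLen n p m (x + 1) := by
    rw [← Finset.add_sum_erase _ _ (Finset.mem_Icc.mpr ⟨le_rfl, hc⟩)]
    congr 1
    rw [Finset.Icc_erase_left]
    have hmap : Finset.Ioc 1 c = (Finset.Icc 1 (c - 1)).map (addRightEmbedding 1) := by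
      rw [Finset.map_add_right_Icc, show c - 1 + 1 = c from by omega]
      exact (Finset.Icc_add_one_left_eq_Ioc 1 c).symm
    rw [hmap, Finset.sum_map]
    simp [addRightEmbedding]
  rw [e3]
  omega

lemma colTab_right_lt (hp : IsMP l n p) (m : ℕ) (hm1 : 1 ≤ m) (hm2 : m ≤ l)
    (hp0 : ∀ j r, m < j → p j r = 0) (k : ℕ) (hk : k = colLen n p m 1)
    (r c m' : ℕ) (hm'1 : 1 ≤ m') (hlt : m' < m) (hc : 1 ≤ c) :
    colTab m (n - k) (rightPart p 1 m) (r, c, m') + k = colTab l n p (r, c, m') := by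
  show (∑ m'' ∈ Finset.Icc (m' + 1) m, compSize (n - k) (rightPart p 1 m) m'')
      + (∑ c' ∈ Finset.Icc 1 (c - 1), colLen (n - k) (rightPart p 1 m) m' c') + r + k
      = (∑ m'' ∈ Finset.Icc (m' + 1) l, compSize n p m'')
      + (∑ c' ∈ Finset.Icc 1 (c - 1), colLen n p m' c') + r
  have e1 : ∑ c' ∈ Finset.Icc 1 (c - 1), colLen (n - k) (rightPart p 1 m) m' c'
      = ∑ c' ∈ Finset.Icc 1 (c - 1), colLen n p m' c' :=
    Finset.sum_congr rfl fun x hx =>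
      colLen_right_lt hp m hm1 hm2 k hk hlt (Finset.mem_Icc.mp hx).1
  have e2 : ∑ m'' ∈ Finset.Icc (m' + 1) l, compSize n p m''
      = ∑ m'' ∈ Finset.Icc (m' + 1) m, compSize n p m'' := by
    symm
    apply Finset.sum_subset
    · intro x hx
      simp only [Finset.mem_Icc] at *
      omega
    · intro x hx hnx
      simp only [Finset.mem_Icc] at hx hnx
      unfold compSize
      exact Finset.sum_eq_zero fun rr _ => hp0 x rr (by omega)
  have hmem : m ∈ Finset.Icc (m' + 1) m := Finset.mem_Icc.mpr ⟨by omega, le_rfl⟩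
  have e3 : ∑ m'' ∈ (Finset.Icc (m' + 1) m).erase m, compSize (n - k) (rightPart p 1 m) m''
      = ∑ m'' ∈ (Finset.Icc (m' + 1) m).erase m, compSize n p m'' := by
    refine Finset.sum_congr rfl fun x hx => ?_
    obtain ⟨hxne, hxm⟩ := Finset.mem_erase.mp hx
    rw [Finset.mem_Icc] at hxm
    exact comp_right_lt hp m hm1 hm2 k hk (by omega)
  have e4 := comp_right_m hp m hm1 hm2 k hk
  have e5 : ∑ m'' ∈ Finset.Icc (m' + 1) m, compSize (n - k) (rightPart p 1 m) m'' + k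
      = ∑ m'' ∈ Finset.Icc (m' + 1) m, compSize n p m'' := by
    rw [← Finset.sum_erase_add _ _ hmem, ← Finset.sum_erase_add _ (compSize n p) hmem, e3]
    omega
  rw [e1, e2]
  omega

lemma colTab_shift (l : ℕ) (m : ℕ) (hm1 : 1 ≤ m) (hm2 : m ≤ l) (hp : IsMP l n p)
    (hp0 : ∀ j r, m < j → p j r = 0) (k : ℕ) (hk : k = colLen n p m 1)
    {B : Node} (hB : InDiag (rightPart p 1 m) B) :
    colTab m (n - k) (rightPart p 1 m) B + k = colTab l n p (shiftNode m B) := by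
  obtain ⟨r, c, mc⟩ := B
  have hf : 1 ≤ mc ∧ mc ≤ m ∧ 1 ≤ r ∧ r ≤ n ∧ 1 ≤ c := diag_facts_right hp hp0 hm1 hB
  by_cases hmc : mc = m
  · rw [shiftNode_eq (show ((r, c, mc) : Node).2.2 = m from hmc), hmc]
    exact colTab_right_m hp m hm1 hm2 hp0 k hk r c hf.2.2.2.2
  · rw [shiftNode_ne (show ¬ ((r, c, mc) : Node).2.2 = m from hmc)]
    exact colTab_right_lt hp m hm1 hm2 hp0 k hk r c mc hf.1 (by omega) hf.2.2.2.2


lemma shiftNode_mk_eq {m r c mc : ℕ} (h : mc = m) :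
    shiftNode m (r, c, mc) = (r, c + 1, mc) := by
  unfold shiftNode
  rw [if_pos (show ((r, c, mc) : Node).2.2 = m from h)]

lemma shiftNode_mk_ne {m r c mc : ℕ} (h : ¬ mc = m) :
    shiftNode m (r, c, mc) = (r, c, mc) := by
  unfold shiftNode
  rw [if_neg (show ¬ ((r, c, mc) : Node).2.2 = m from h)]

lemma addFirstCol_mk_col1 (k m : ℕ) (t : Node → ℕ) (r : ℕ) :
    addFirstCol k m t (r, 1, m) = r := by
  unfold addFirstCol
  rw [if_pos (show ((r, 1, m) : Node).2.2 = m from rfl), if_pos rfl]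

lemma addFirstCol_mk_m {k m : ℕ} {t : Node → ℕ} {r c : ℕ} (hc : ¬ c = 1) :
    addFirstCol k m t (r, c, m) = k + t (r, c - 1, m) := by
  unfold addFirstCol
  rw [if_pos (show ((r, c, m) : Node).2.2 = m from rfl),
    if_neg (show ¬ ((r, c, m) : Node).2.1 = 1 from hc)]

lemma addFirstCol_mk_ne {k m : ℕ} {t : Node → ℕ} {r c mc : ℕ} (h : ¬ mc = m) :
    addFirstCol k m t (r, c, mc) = k + t (r, c, mc) := by
  unfold addFirstCol
  rw [if_neg (show ¬ ((r, c, mc) : Node).2.2 = m from h)]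

lemma part2_aux (l n : ℕ) (m : ℕ) (hm1 : 1 ≤ m) (hm2 : m ≤ l)
    (lam mu : ℕ → ℕ → ℕ) (hlam : IsMP l n lam) (hmu : IsMP l n mu)
    (hlam0 : ∀ j r, m < j → lam j r = 0) (hmu0 : ∀ j r, m < j → mu j r = 0)
    (k : ℕ) (hk : k = colLen n lam m 1) (hk' : colLen n mu m 1 = k)
    (t : Node → ℕ) (ht : IsTab n mu t) (hst : IsStd mu t) (hd : ColDomOn l n lam mu t n) :
    ∀ r, 1 ≤ r → r ≤ k → t (r, 1, m) = r := by
  have hkn : k ≤ n := by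
    rw [hk]
    exact colLen_le_n lam m 1
  have hdiag : ∀ r, 1 ≤ r → r ≤ k → InDiag mu (r, 1, m) := fun r h1 h2 =>
    (first_col_mem hmu m r).2 ⟨h1, by omega⟩
  have hloc : ∀ i A, 1 ≤ i → i ≤ k → InDiag mu A → t A = i →
      A.2.2 = m ∧ A.2.1 = 1 ∧ 1 ≤ A.1 ∧ A.1 ≤ k := by
    intro i A hi1 hi2 hA htA
    have hBd : InDiag lam (i, 1, m) := (first_col_mem hlam m i).2 ⟨hi1, by omega⟩
    have hBc : colTab l n lam (i, 1, m) = i := colTab_first_col l m hlam0 i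
    have hw := hd i A (i, 1, m) hi1 (by omega) hA htA hBd hBc
    have hw' : m < A.2.2 ∨ (A.2.2 = m ∧ A.2.1 ≤ 1) := hw
    have hfA := diag_facts hmu hmu0 hA
    rcases hw' with hw' | ⟨hw1, hw2⟩
    · exfalso
      omega
    · have hc1 : A.2.1 = 1 := by omega
      have hr2 : 1 ≤ mu A.2.2 A.1 := by
        have := hA.2
        omega
      rw [hw1] at hr2
      have hrk := ((le_iff_le_colLen hmu m le_rfl A.1).1 hr2).2
      exact ⟨hw1, hc1, hfA.2.2.1, by omega⟩
  have hmono : ∀ r', r' ≤ k → ∀ r, 1 ≤ r → r < r' → t (r, 1, m) < t (r', 1, m) := by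
    intro r'
    induction r' with
    | zero => intro _ r _ h; omega
    | succ x ih =>
      intro hxk r h1 h2
      have hx1 : 1 ≤ x := by omega
      have hstep : t (x, 1, m) < t (x + 1, 1, m) :=
        hst.2 x 1 m (hdiag x hx1 (by omega)) (hdiag (x + 1) (by omega) hxk)
      by_cases hc : r = x
      · rw [hc]
        exact hstep
      · have := ih (by omega) r h1 (by omega)
        omega
  have hge : ∀ r, r ≤ k → 1 ≤ r → r ≤ t (r, 1, m) := by
    intro r
    induction r with
    | zero => intro _ h; omega
    | succ x ih =>
      intro h2 _
      by_cases hx : x = 0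
      · subst hx
        exact (ht.1 _ (hdiag 1 le_rfl h2)).1
      · have hxx := ih (by omega) (by omega)
        have := hmono (x + 1) h2 x (by omega) (by omega)
        omega
  have hmain : ∀ N, N ≤ k → ∀ r', 1 ≤ r' → r' ≤ N → t (r', 1, m) = r' := by
    intro N
    induction N with
    | zero => intro _ r' h1 h2; omega
    | succ x ih =>
      intro hNk r' h1 h2
      by_cases hc : r' ≤ x
      · exact ih (by omega) r' h1 hc
      · have hr' : r' = x + 1 := by omega
        obtain ⟨A, hA, htA⟩ := ht.2.2 r' h1 (by omega)
        obtain ⟨hA1, hA2, hA3, hA4⟩ := hloc r' A h1 (by omega) hA htA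
        obtain ⟨a1, a2, a3⟩ := A
        have e3 : a3 = m := hA1
        have e2 : a2 = 1 := hA2
        subst e3
        subst e2
        have ha3 : 1 ≤ a1 := hA3
        have ha4 : a1 ≤ k := hA4
        by_cases hlt2 : a1 < r'
        · have := ih (by omega) a1 ha3 (by omega)
          omega
        · by_cases hgt : r' < a1
          · have h1' := hmono a1 ha4 r' h1 hgt
            have h2' := hge r' (by omega) h1
            omega
          · have heq : a1 = r' := by omega
            subst heq
            exact htA
  exact fun r h1 h2 => hmain k le_rfl r h1 h2

end Helpers

/-- first column removal for dominated tableaux. Suppose components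
`m+1,…,l` of `λ` and `μ` are empty and the first columns of components `m` of `λ` and
`μ` both have length `k`. Then `Std_λ(μ) = { t⁺ : t ∈ Std_{λ_R(1,m)}(μ_R(1,m)) }`;
in particular every `λ`-column-dominated standard `μ`-tableau has the entries `1,…,k`
in order down the first column of its `m`-th component. -/
theorem stdColDom_first_column_removal (l n : ℕ) (hl : 1 ≤ l) (hn : 1 ≤ n)
    (m : ℕ) (hm1 : 1 ≤ m) (hm2 : m ≤ l)
    (lam mu : ℕ → ℕ → ℕ) (hlam : IsMP l n lam) (hmu : IsMP l n mu)
    (hlam0 : ∀ j r, m < j → lam j r = 0)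
    (hmu0 : ∀ j r, m < j → mu j r = 0)
    (k : ℕ) (hk : k = colLen n lam m 1) (hk' : colLen n mu m 1 = k) :
    (∀ t : Node → ℕ,
      (IsTab n mu t ∧ IsStd mu t ∧ ColDomOn l n lam mu t n) ↔
        ∃ s : Node → ℕ,
          IsTab (n - k) (rightPart mu 1 m) s ∧ IsStd (rightPart mu 1 m) s ∧
          ColDomOn m (n - k) (rightPart lam 1 m) (rightPart mu 1 m) s (n - k) ∧
          ∀ A, InDiag mu A → t A = addFirstCol k m s A) ∧
    (∀ t : Node → ℕ, IsTab n mu t → IsStd mu t → ColDomOn l n lam mu t n →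
      ∀ r, 1 ≤ r → r ≤ k → t (r, 1, m) = r) := by
  have hkn : k ≤ n := by
    rw [hk]
    exact colLen_le_n lam m 1
  have hp2 := part2_aux l n m hm1 hm2 lam mu hlam hmu hlam0 hmu0 k hk hk'
  constructor
  · intro t
    constructor
    · rintro ⟨ht, hstd, hdom⟩
      have hp2t := hp2 t ht hstd hdom
      have hC : ∀ B, InDiag mu B → ¬(B.2.2 = m ∧ B.2.1 = 1) → k + 1 ≤ t B := by
        intro B hB hnot
        by_contra hcon
        push_neg at hcon
        have h1 : 1 ≤ t B := (ht.1 B hB).1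
        have h2 : InDiag mu (t B, 1, m) := (first_col_mem hmu m (t B)).2 ⟨h1, by omega⟩
        have h3 : t (t B, 1, m) = t B := hp2t (t B) h1 (by omega)
        have h4 : B = (t B, 1, m) := ht.2.1 B (t B, 1, m) hB h2 h3.symm
        apply hnot
        rw [h4]
        exact ⟨rfl, rfl⟩
      have hsh1 : ∀ A, InDiag (rightPart mu 1 m) A →
          InDiag mu (shiftNode m A) ∧ ¬((shiftNode m A).2.2 = m ∧ (shiftNode m A).2.1 = 1) :=
        fun A hA => shift_diag hmu hmu0 hm1 hA
      have hval : ∀ A, InDiag (rightPart mu 1 m) A →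
          k + 1 ≤ t (shiftNode m A) ∧ t (shiftNode m A) ≤ n := by
        intro A hA
        obtain ⟨h1, h2⟩ := hsh1 A hA
        exact ⟨hC _ h1 h2, (ht.1 _ h1).2⟩
      refine ⟨fun A => t (shiftNode m A) - k, ⟨?_, ?_, ?_⟩, ⟨?_, ?_⟩, ?_, ?_⟩
      · intro A hA
        have := hval A hA
        show 1 ≤ t (shiftNode m A) - k ∧ t (shiftNode m A) - k ≤ n - k
        omega
      · intro A B hA hB hEq
        have h1 := hval A hA
        have h2 := hval B hB
        have hEq' : t (shiftNode m A) - k = t (shiftNode m B) - k := hEq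
        have h3 : t (shiftNode m A) = t (shiftNode m B) := by omega
        exact shift_inj m (ht.2.1 _ _ (hsh1 A hA).1 (hsh1 B hB).1 h3)
      · intro i hi1 hi2
        obtain ⟨A, hA, htA⟩ := ht.2.2 (k + i) (by omega) (by omega)
        have hnot : ¬(A.2.2 = m ∧ A.2.1 = 1) := by
          rintro ⟨he1, he2⟩
          have hAe : A = (A.1, 1, m) := by
            conv_lhs => rw [show A = (A.1, A.2.1, A.2.2) from rfl]
            rw [he1, he2]
          rw [hAe] at hA htA
          have hr := (first_col_mem hmu m A.1).1 hA
          have := hp2t A.1 hr.1 (by omega)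
          omega
        obtain ⟨A', hA', hshA⟩ := unshift_diag hmu hmu0 hm1 hA hnot
        refine ⟨A', hA', ?_⟩
        show t (shiftNode m A') - k = i
        rw [hshA, htA]
        omega
      · intro r c mc h1 h2
        show t (shiftNode m (r, c, mc)) - k < t (shiftNode m (r, c + 1, mc)) - k
        have hv1 := hval _ h1
        have hv2 := hval _ h2
        have hd1 := (hsh1 _ h1).1
        have hd2 := (hsh1 _ h2).1
        by_cases hmc : mc = m
        · rw [shiftNode_mk_eq hmc] at hv1 hd1 ⊢
          rw [shiftNode_mk_eq hmc] at hv2 hd2 ⊢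
          have hstep := hstd.1 r (c + 1) mc hd1 hd2
          omega
        · rw [shiftNode_mk_ne hmc] at hv1 hd1 ⊢
          rw [shiftNode_mk_ne hmc] at hv2 hd2 ⊢
          have hstep := hstd.1 r c mc hd1 hd2
          omega
      · intro r c mc h1 h2
        show t (shiftNode m (r, c, mc)) - k < t (shiftNode m (r + 1, c, mc)) - k
        have hv1 := hval _ h1
        have hv2 := hval _ h2
        have hd1 := (hsh1 _ h1).1
        have hd2 := (hsh1 _ h2).1
        by_cases hmc : mc = m
        · rw [shiftNode_mk_eq hmc] at hv1 hd1 ⊢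
          rw [shiftNode_mk_eq hmc] at hv2 hd2 ⊢
          have hstep := hstd.2 r (c + 1) mc hd1 hd2
          omega
        · rw [shiftNode_mk_ne hmc] at hv1 hd1 ⊢
          rw [shiftNode_mk_ne hmc] at hv2 hd2 ⊢
          have hstep := hstd.2 r c mc hd1 hd2
          omega
      · intro i A B hi1 hi2 hA hsA hB hcB
        have hsA' : t (shiftNode m A) - k = i := hsA
        have hv := hval A hA
        have htphi : t (shiftNode m A) = k + i := by omega
        have hcs := colTab_shift l m hm1 hm2 hlam hlam0 k hk hB
        have hct : colTab l n lam (shiftNode m B) = k + i := by omega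
        have hBd : InDiag lam (shiftNode m B) := (shift_diag hlam hlam0 hm1 hB).1
        have hw := hdom (k + i) (shiftNode m A) (shiftNode m B) (by omega) (by omega)
          (hsh1 A hA).1 htphi hBd hct
        exact (weaklyLeft_shift_iff m A B).1 hw
      · intro A hA
        by_cases hm' : A.2.2 = m ∧ A.2.1 = 1
        · have hAe : A = (A.1, 1, m) := by
            conv_lhs => rw [show A = (A.1, A.2.1, A.2.2) from rfl]
            rw [hm'.1, hm'.2]
          rw [hAe] at hA ⊢
          rw [addFirstCol_mk_col1]
          have hr := (first_col_mem hmu m A.1).1 hA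
          exact hp2t A.1 hr.1 (by omega)
        · by_cases hcm : A.2.2 = m
          · have hc1 : ¬ A.2.1 = 1 := fun hc => hm' ⟨hcm, hc⟩
            have hAe : A = (A.1, A.2.1, m) := by
              conv_lhs => rw [show A = (A.1, A.2.1, A.2.2) from rfl]
              rw [hcm]
            rw [hAe] at hA ⊢
            rw [addFirstCol_mk_m hc1]
            show t (A.1, A.2.1, m) = k + (t (shiftNode m (A.1, A.2.1 - 1, m)) - k)
            rw [shiftNode_mk_eq rfl]
            have hc2 : 1 ≤ A.2.1 := hA.1
            rw [show A.2.1 - 1 + 1 = A.2.1 from by omega]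
            have := hC _ hA (by
              rw [← hAe]
              exact hm')
            omega
          · have hAe : A = (A.1, A.2.1, A.2.2) := rfl
            conv_lhs => rw [hAe]
            conv_rhs => rw [hAe]
            rw [addFirstCol_mk_ne hcm]
            show t (A.1, A.2.1, A.2.2) = k + (t (shiftNode m (A.1, A.2.1, A.2.2)) - k)
            rw [shiftNode_mk_ne hcm]
            have := hC _ hA hm'
            rw [← hAe]
            omega
    · rintro ⟨s, hsT, hsStd, hsDom, hts⟩
      have hsb : ∀ A', InDiag (rightPart mu 1 m) A' → 1 ≤ s A' ∧ s A' ≤ n - k := hsT.1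
      have hEv1 : ∀ r, InDiag mu (r, 1, m) → t (r, 1, m) = r ∧ 1 ≤ r ∧ r ≤ k := by
        intro r h
        have h' := hts _ h
        rw [addFirstCol_mk_col1] at h'
        have hr := (first_col_mem hmu m r).1 h
        exact ⟨h', hr.1, by omega⟩
      have hEv2 : ∀ r c, 2 ≤ c → InDiag mu (r, c, m) →
          t (r, c, m) = k + s (r, c - 1, m) ∧ InDiag (rightPart mu 1 m) (r, c - 1, m) := by
        intro r c hc h
        have h' := hts _ h
        rw [addFirstCol_mk_m (show ¬ c = 1 by omega)] at h'
        refine ⟨h', ⟨?_, ?_⟩⟩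
        · show 1 ≤ c - 1
          omega
        · show c - 1 ≤ rightPart mu 1 m m r
          rw [rightPart_eq]
          have h2 : c ≤ mu m r := h.2
          omega
      have hEv3 : ∀ r c mc, ¬ mc = m → InDiag mu (r, c, mc) →
          t (r, c, mc) = k + s (r, c, mc) ∧ InDiag (rightPart mu 1 m) (r, c, mc) := by
        intro r c mc hmc h
        have hf : 1 ≤ mc ∧ mc ≤ m ∧ 1 ≤ r ∧ r ≤ n ∧ 1 ≤ c := diag_facts hmu hmu0 h
        have h' := hts _ h
        rw [addFirstCol_mk_ne hmc] at h'
        refine ⟨h', ⟨h.1, ?_⟩⟩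
        show c ≤ rightPart mu 1 m mc r
        rw [rightPart_lt r (by omega)]
        exact h.2
      have hEvShift : ∀ A', InDiag (rightPart mu 1 m) A' →
          t (shiftNode m A') = k + s A' ∧ InDiag mu (shiftNode m A') := by
        intro A' hA'
        obtain ⟨r, c, mc⟩ := A'
        have hf : 1 ≤ mc ∧ mc ≤ m ∧ 1 ≤ r ∧ r ≤ n ∧ 1 ≤ c := diag_facts_right hmu hmu0 hm1 hA'
        by_cases hmc : mc = m
        · subst hmc
          rw [shiftNode_mk_eq rfl]
          have hd : InDiag mu (r, c + 1, mc) := by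
            have := (shift_diag hmu hmu0 hm1 hA').1
            rwa [shiftNode_mk_eq rfl] at this
          obtain ⟨he, _⟩ := hEv2 r (c + 1) (by omega) hd
          rw [show c + 1 - 1 = c from by omega] at he
          exact ⟨he, hd⟩
        · rw [shiftNode_mk_ne hmc]
          have hd : InDiag mu (r, c, mc) := by
            have := (shift_diag hmu hmu0 hm1 hA').1
            rwa [shiftNode_mk_ne hmc] at this
          exact ⟨(hEv3 r c mc hmc hd).1, hd⟩
      have hEvU : ∀ A, InDiag mu A →
          (A.2.2 = m ∧ A.2.1 = 1 ∧ t A = A.1 ∧ 1 ≤ A.1 ∧ A.1 ≤ k) ∨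
          (∃ A', InDiag (rightPart mu 1 m) A' ∧ shiftNode m A' = A ∧ t A = k + s A') := by
        intro A hA
        by_cases hm' : A.2.2 = m ∧ A.2.1 = 1
        · left
          have hAe : A = (A.1, 1, m) := by
            conv_lhs => rw [show A = (A.1, A.2.1, A.2.2) from rfl]
            rw [hm'.1, hm'.2]
          have h1 := hEv1 A.1 (by rw [← hAe]; exact hA)
          refine ⟨hm'.1, hm'.2, ?_, h1.2.1, h1.2.2⟩
          conv_lhs => rw [hAe]
          exact h1.1
        · right
          obtain ⟨A', hA', hsh⟩ := unshift_diag hmu hmu0 hm1 hA hm'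
          refine ⟨A', hA', hsh, ?_⟩
          have := (hEvShift A' hA').1
          rw [hsh] at this
          exact this
      refine ⟨⟨?_, ?_, ?_⟩, ⟨?_, ?_⟩, ?_⟩
      · intro A hA
        rcases hEvU A hA with ⟨h1, h2, h3, h4, h5⟩ | ⟨A', hA', hsh, h3⟩
        · omega
        · have := hsb A' hA'
          omega
      · intro A B hA hB hEq
        rcases hEvU A hA with ⟨ha1, ha2, ha3, ha4, ha5⟩ | ⟨A', hA', hshA, ha3⟩ <;>
          rcases hEvU B hB with ⟨hb1, hb2, hb3, hb4, hb5⟩ | ⟨B', hB', hshB, hb3⟩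
        · have hab : A.1 = B.1 := by omega
          calc A = (A.1, A.2.1, A.2.2) := rfl
            _ = (B.1, B.2.1, B.2.2) := by rw [hab, ha2, hb2, ha1, hb1]
            _ = B := rfl
        · exfalso
          have := hsb B' hB'
          omega
        · exfalso
          have := hsb A' hA'
          omega
        · have h1 := hsb A' hA'
          have heq2 : s A' = s B' := by omega
          have := hsT.2.1 A' B' hA' hB' heq2
          rw [← hshA, ← hshB, this]
      · intro i hi1 hi2
        by_cases hik : i ≤ k
        · refine ⟨(i, 1, m), (first_col_mem hmu m i).2 ⟨hi1, by omega⟩, ?_⟩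
          exact (hEv1 i ((first_col_mem hmu m i).2 ⟨hi1, by omega⟩)).1
        · obtain ⟨A', hA', hsA'⟩ := hsT.2.2 (i - k) (by omega) (by omega)
          refine ⟨shiftNode m A', (hEvShift A' hA').2, ?_⟩
          rw [(hEvShift A' hA').1, hsA']
          omega
      · intro r c mc h1 h2
        by_cases hmc : mc = m
        · subst hmc
          by_cases hc1 : c = 1
          · subst hc1
            obtain ⟨e2, d2⟩ := hEv2 r (1 + 1) (by omega) h2
            rw [(hEv1 r h1).1, e2]
            have := hsb _ d2
            have hrk := (hEv1 r h1).2.2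
            omega
          · have hx : 1 ≤ c := h1.1
            have hcc : 2 ≤ c := by omega
            obtain ⟨e1, d1⟩ := hEv2 r c hcc h1
            obtain ⟨e2, d2⟩ := hEv2 r (c + 1) (by omega) h2
            rw [e1, e2]
            have d2' : InDiag (rightPart mu 1 mc) (r, c - 1 + 1, mc) := by
              rw [show c - 1 + 1 = c from by omega]
              rwa [show c + 1 - 1 = c from by omega] at d2
            have hstep := hsStd.1 r (c - 1) mc d1 d2'
            have he : s (r, c - 1 + 1, mc) = s (r, c + 1 - 1, mc) := by
              rw [show c - 1 + 1 = c from by omega, show c + 1 - 1 = c from by omega]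
            omega
        · obtain ⟨e1, d1⟩ := hEv3 r c mc hmc h1
          obtain ⟨e2, d2⟩ := hEv3 r (c + 1) mc hmc h2
          rw [e1, e2]
          have := hsStd.1 r c mc d1 d2
          omega
      · intro r c mc h1 h2
        by_cases hmc : mc = m
        · subst hmc
          by_cases hc1 : c = 1
          · subst hc1
            rw [(hEv1 r h1).1, (hEv1 (r + 1) h2).1]
            omega
          · have hx : 1 ≤ c := h1.1
            have hcc : 2 ≤ c := by omega
            obtain ⟨e1, d1⟩ := hEv2 r c hcc h1
            obtain ⟨e2, d2⟩ := hEv2 (r + 1) c hcc h2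
            rw [e1, e2]
            have := hsStd.2 r (c - 1) mc d1 d2
            omega
        · obtain ⟨e1, d1⟩ := hEv3 r c mc hmc h1
          obtain ⟨e2, d2⟩ := hEv3 (r + 1) c mc hmc h2
          rw [e1, e2]
          have := hsStd.2 r c mc d1 d2
          omega
      · intro i A B hi1 hin hA htA hB hcB
        rcases hEvU A hA with ⟨ha1, ha2, ha3, ha4, ha5⟩ | ⟨A', hA', hshA, ha3⟩
        · have hik : i ≤ k := by omega
          obtain ⟨hb1, hb2, _⟩ := colTab_low l m hm1 hm2 hlam hlam0 k hk hB (by omega)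
          exact Or.inr ⟨by omega, by omega⟩
        · have hkslt := hsb A' hA'
          have hik : k + 1 ≤ i := by omega
          have hnotB : ¬(B.2.2 = m ∧ B.2.1 = 1) := by
            rintro ⟨he1, he2⟩
            have hBe : B = (B.1, 1, m) := by
              conv_lhs => rw [show B = (B.1, B.2.1, B.2.2) from rfl]
              rw [he1, he2]
            rw [hBe] at hB hcB
            have hr := (first_col_mem hlam m B.1).1 hB
            rw [colTab_first_col l m hlam0 B.1] at hcB
            omega
          obtain ⟨B', hB', hshB⟩ := unshift_diag hlam hlam0 hm1 hB hnotB
          have hctB : colTab m (n - k) (rightPart lam 1 m) B' + k = colTab l n lam B := by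
            rw [← hshB]
            exact colTab_shift l m hm1 hm2 hlam hlam0 k hk hB'
          have hw := hsDom (i - k) A' B' (by omega) (by omega) hA' (by omega) hB' (by omega)
          rw [← hshA, ← hshB]
          exact (weaklyLeft_shift_iff m A' B').2 hw
  · intro t ht hstd hdom
    exact hp2 t ht hstd hdom

end FS
end

section
/- Fix c ≥ 0 and 1 ≤ m ≤ l, and let λ, μ ∈ 𝒫^l_n with λ ⊵ μ and |λ_L(c,m)| = |μ_L(c,m)| =: n_L. Then Std_λ(μ) = { t_L # t_R : t_L ∈ Std_{λ_L(c,m)}(μ_L(c,m)), t_R ∈ Std_{λ_R(c,m)}(μ_R(c,m)) }. -/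
namespace FS

open scoped Classical

/-!
The nodes of `[μ]` split into the copy of `[μ_L(c,m)]` and the copy of `[μ_R(c,m)]`, and both
identifications move each component rigidly while keeping the left-to-right order of nodes.
So if the entries `1, …, n_L` of a `μ`-tableau `t` are exactly those on `[μ_L(c,m)]`, then
`t = t_L # t_R` for unique `t_L`, `t_R`, and `t` is a tableau, is standard, or is
`λ`-column-dominated iff both `t_L` and `t_R` are; for column dominance this uses
`t_λ = t_{λ_L} # t_{λ_R}`. On the right-hand side the condition on the entries holds by
construction. On the left-hand side column dominance moves the entries `1, …, n_L` of `t_λ`,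
which fill `[λ_L(c,m)]`, weakly to the left, hence into `[μ_L(c,m)]`; as that has `n_L` nodes,
they fill it.
-/

open Finset

section Multipartition

variable {l n : ℕ} {p : ℕ → ℕ → ℕ}

lemma part_antitone (ha : ∀ k r, 1 ≤ r → p k (r + 1) ≤ p k r) {k r s : ℕ} (hr : 1 ≤ r)
    (hrs : r ≤ s) : p k s ≤ p k r :=
  antitoneOn_nat_Ici_of_succ_le (fun r' hr' => ha k r' hr') hr (le_trans hr hrs) hrs

lemma IsMP.part_le (hp : IsMP l n p) (k r : ℕ) : p k r ≤ n := by
  by_cases h : k = 0 ∨ l < k ∨ r = 0 ∨ n < r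
  · simp [hp.1 k r h]
  · push Not at h
    calc p k r ≤ compSize n p k :=
          single_le_sum (f := p k) (fun _ _ => Nat.zero_le _) (mem_Icc.2 ⟨by omega, h.2.2.2⟩)
      _ ≤ ∑ k' ∈ Icc 1 l, compSize n p k' :=
          single_le_sum (fun _ _ => Nat.zero_le _) (mem_Icc.2 ⟨by omega, h.2.1⟩)
      _ = n := hp.2.2

lemma IsMP.bounds {r c' k : ℕ} (hp : IsMP l n p) (hA : InDiag p (r, c', k)) :
    1 ≤ r ∧ r ≤ n ∧ 1 ≤ c' ∧ c' ≤ n ∧ 1 ≤ k ∧ k ≤ l := by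
  obtain ⟨h1, h2⟩ : 1 ≤ c' ∧ c' ≤ p k r := hA
  have hpos : p k r ≠ 0 := by omega
  have hle := hp.part_le k r
  have hout := mt (hp.1 k r) hpos
  omega

noncomputable def cells (l n : ℕ) (p : ℕ → ℕ → ℕ) : Finset Node :=
  (Icc 1 n ×ˢ Icc 1 n ×ˢ Icc 1 l).filter (InDiag p)

lemma mem_cells (hp : IsMP l n p) {A : Node} : A ∈ cells l n p ↔ InDiag p A := by
  obtain ⟨r, c', k⟩ := A
  refine ⟨fun h => (mem_filter.1 h).2, fun h => ?_⟩
  have := hp.bounds h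
  simp only [cells, mem_filter, mem_product, mem_Icc]
  exact ⟨by omega, h⟩

lemma card_cells (hp : IsMP l n p) : (cells l n p).card = n := by
  have hrow : ∀ k r, ((Icc 1 n).filter fun c' => InDiag p (r, c', k)).card = p k r := by
    intro k r
    have : ((Icc 1 n).filter fun c' => InDiag p (r, c', k)) = Icc 1 (p k r) := by
      ext c'
      have hle := hp.part_le k r
      rw [Finset.mem_filter]
      simp only [InDiag, mem_Icc]
      omega
    rw [this, Nat.card_Icc, Nat.add_sub_cancel]
  calc (cells l n p).card
      = ∑ r ∈ Icc 1 n, ∑ c' ∈ Icc 1 n, ∑ k ∈ Icc 1 l,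
          if InDiag p (r, c', k) then 1 else 0 := by
        rw [cells, card_filter, sum_product]
        simp_rw [sum_product]
    _ = ∑ r ∈ Icc 1 n, ∑ k ∈ Icc 1 l, p k r := sum_congr rfl fun r _ => by
        rw [sum_comm]
        simp_rw [← card_filter, hrow]
    _ = ∑ k ∈ Icc 1 l, ∑ r ∈ Icc 1 n, p k r := sum_comm
    _ = n := hp.2.2

end Multipartition

section ColumnReading

variable {l n : ℕ} {p : ℕ → ℕ → ℕ}

lemma sum_colLen (n : ℕ) (p : ℕ → ℕ → ℕ) (k C : ℕ) :
    ∑ col ∈ Icc 1 C, colLen n p k col = ∑ r ∈ Icc 1 n, min (p k r) C := by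
  simp_rw [colLen, card_filter]
  rw [sum_comm]
  refine sum_congr rfl fun r _ => ?_
  rw [← card_filter]
  have : ((Icc 1 C).filter fun col => col ≤ p k r) = Icc 1 (min (p k r) C) := by
    ext x; simp only [mem_filter, mem_Icc, le_min_iff]; omega
  rw [this, Nat.card_Icc, Nat.add_sub_cancel]

lemma colTab_eq (r c' k : ℕ) :
    colTab l n p (r, c', k) =
      ∑ k' ∈ Ioc k l, compSize n p k' + ∑ r' ∈ Icc 1 n, min (p k r') (c' - 1) + r := by
  rw [colTab, Icc_add_one_left_eq_Ioc, sum_colLen]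

lemma colTab_le (hp : IsMP l n p) {r c' k : ℕ} (hA : InDiag p (r, c', k)) :
    colTab l n p (r, c', k) ≤
      ∑ k' ∈ Ioc k l, compSize n p k' + ∑ r' ∈ Icc 1 n, min (p k r') c' := by
  obtain ⟨hr, hrn, hc, -, -, -⟩ := hp.bounds hA
  obtain ⟨-, hcp⟩ : 1 ≤ c' ∧ c' ≤ p k r := hA
  have hcol : r ≤ colLen n p k c' := by
    calc r = (Icc 1 r).card := by simp
      _ ≤ colLen n p k c' := card_le_card fun x hx => by
          simp only [mem_Icc] at hx
          have := part_antitone hp.2.1 (k := k) hx.1 hx.2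
          simp only [Finset.mem_filter, mem_Icc]
          exact ⟨⟨hx.1, hx.2.trans hrn⟩, hcp.trans this⟩
  have hsplit := sum_Icc_succ_top (show 1 ≤ c' - 1 + 1 by omega) (colLen n p k)
  rw [Nat.sub_add_cancel hc] at hsplit
  rw [colTab_eq, ← sum_colLen, ← sum_colLen, hsplit]
  omega

lemma sum_min_le_compSize (k C : ℕ) : ∑ r ∈ Icc 1 n, min (p k r) C ≤ compSize n p k :=
  sum_le_sum fun _ _ => min_le_left _ _

lemma colTab_lt_of_lt_col (hp : IsMP l n p) {r₁ r₂ c₁ c₂ k : ℕ}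
    (h₁ : InDiag p (r₁, c₁, k)) (h₂ : InDiag p (r₂, c₂, k)) (hc : c₁ < c₂) :
    colTab l n p (r₁, c₁, k) < colTab l n p (r₂, c₂, k) := by
  have hmono : ∑ r ∈ Icc 1 n, min (p k r) c₁ ≤ ∑ r ∈ Icc 1 n, min (p k r) (c₂ - 1) :=
    sum_le_sum fun _ _ => min_le_min_left _ (by omega)
  have h₁le := colTab_le hp h₁
  rw [colTab_eq (r := r₂)]
  have := (hp.bounds h₂).1
  omega

lemma compSize_add_sum_Ioc_le {j k : ℕ} (hjk : j < k) (hkl : k ≤ l) :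
    compSize n p k + ∑ k' ∈ Ioc k l, compSize n p k' ≤
      ∑ k' ∈ Ioc j l, compSize n p k' := by
  rw [← sum_Ioc_consecutive _ hjk.le hkl]
  gcongr
  exact single_le_sum (fun _ _ => Nat.zero_le _) (mem_Ioc.2 ⟨hjk, le_rfl⟩)

lemma colTab_lt_of_lt_comp (hp : IsMP l n p) {r₁ r₂ c₁ c₂ k₁ k₂ : ℕ}
    (h₁ : InDiag p (r₁, c₁, k₁)) (h₂ : InDiag p (r₂, c₂, k₂)) (hk : k₂ < k₁) :
    colTab l n p (r₁, c₁, k₁) < colTab l n p (r₂, c₂, k₂) := by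
  have hS := compSize_add_sum_Ioc_le (n := n) (p := p) hk (hp.bounds h₁).2.2.2.2.2
  have h₁le := colTab_le hp h₁
  have hmin := sum_min_le_compSize (n := n) (p := p) k₁ c₁
  rw [colTab_eq (r := r₂)]
  have := (hp.bounds h₂).1
  omega

lemma eq_of_colTab_eq (hp : IsMP l n p) {A B : Node} (hA : InDiag p A) (hB : InDiag p B)
    (h : colTab l n p A = colTab l n p B) : A = B := by
  obtain ⟨r₁, c₁, k₁⟩ := A
  obtain ⟨r₂, c₂, k₂⟩ := B
  rcases lt_trichotomy k₁ k₂ with hk | rfl | hk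
  · exact absurd h (colTab_lt_of_lt_comp hp hB hA hk).ne'
  · rcases lt_trichotomy c₁ c₂ with hc | rfl | hc
    · exact absurd h (colTab_lt_of_lt_col hp hA hB hc).ne
    · rw [colTab_eq, colTab_eq] at h
      rw [show r₁ = r₂ by omega]
    · exact absurd h (colTab_lt_of_lt_col hp hB hA hc).ne'
  · exact absurd h (colTab_lt_of_lt_comp hp hA hB hk).ne

lemma colTab_mem_Icc (hp : IsMP l n p) {A : Node} (hA : InDiag p A) :
    1 ≤ colTab l n p A ∧ colTab l n p A ≤ n := by
  obtain ⟨r, c', k⟩ := A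
  obtain ⟨hr, -, -, -, hk, hkl⟩ := hp.bounds hA
  have hS : compSize n p k + ∑ k' ∈ Ioc k l, compSize n p k' ≤ n := by
    calc _ ≤ ∑ k' ∈ Ioc 0 l, compSize n p k' := compSize_add_sum_Ioc_le (by omega) hkl
      _ = n := by rw [← Icc_add_one_left_eq_Ioc]; exact hp.2.2
  have hle := colTab_le hp hA
  have hmin := sum_min_le_compSize (n := n) (p := p) k c'
  rw [colTab_eq] at hle ⊢
  omega

theorem isTab_colTab (hp : IsMP l n p) : IsTab n p (colTab l n p) := by
  refine ⟨fun A hA => colTab_mem_Icc hp hA, fun A B hA hB h => eq_of_colTab_eq hp hA hB h, ?_⟩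
  have himage : (cells l n p).image (colTab l n p) = Icc 1 n := by
    refine eq_of_subset_of_card_le (fun i hi => ?_) ?_
    · obtain ⟨A, hA, rfl⟩ := mem_image.1 hi
      exact mem_Icc.2 (colTab_mem_Icc hp ((mem_cells hp).1 hA))
    · rw [card_image_of_injOn fun A hA B hB h =>
        eq_of_colTab_eq hp ((mem_cells hp).1 hA) ((mem_cells hp).1 hB) h, card_cells hp]
      simp
  intro i hi hin
  obtain ⟨A, hA, hAi⟩ := mem_image.1 (himage ▸ mem_Icc.2 ⟨hi, hin⟩)
  exact ⟨A, (mem_cells hp).1 hA, hAi⟩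

end ColumnReading

section Shift

def IsStep (d : Node) : Prop := d = (0, 1, 0) ∨ d = (1, 0, 0)

lemma isStd_iff_step {p : ℕ → ℕ → ℕ} {t : Node → ℕ} :
    IsStd p t ↔ ∀ A d, IsStep d → InDiag p A → InDiag p (A + d) → t A < t (A + d) := by
  refine ⟨?_, fun h =>
    ⟨fun r c k => h (r, c, k) _ (Or.inl rfl), fun r c k => h (r, c, k) _ (Or.inr rfl)⟩⟩
  rintro ⟨hrow, hcol⟩ ⟨r, c, k⟩ d (rfl | rfl)
  exacts [hrow r c k, hcol r c k]

lemma weaklyLeft_add_step {A d : Node} (hd : IsStep d) : WeaklyLeft A (A + d) := by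
  rcases hd with rfl | rfl <;> simp [WeaklyLeft]

structure IsShift (φ : Node → Node) : Prop where
  injective : Function.Injective φ
  map_add_step : ∀ A d, IsStep d → φ (A + d) = φ A + d
  weaklyLeft_iff : ∀ A B, WeaklyLeft (φ A) (φ B) ↔ WeaklyLeft A B

variable {l n l' n' s k j : ℕ} {p q lam mu lam' mu' : ℕ → ℕ → ℕ} {t t' : Node → ℕ}
  {φ : Node → Node}

lemma IsTab.restrict (ht : IsTab n p t) (hφ : Function.Injective φ) (hsk : s + k ≤ n)
    (hq : ∀ A, InDiag q A → InDiag p (φ A)) (hval : ∀ A, InDiag q A → t (φ A) = s + t' A)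
    (hwin : ∀ A, InDiag p A →
      ((∃ A', InDiag q A' ∧ φ A' = A) ↔ s < t A ∧ t A ≤ s + k)) :
    IsTab k q t' := by
  refine ⟨fun A hA => ?_, fun A B hA hB h => hφ (ht.2.1 _ _ (hq A hA) (hq B hB) ?_),
    fun i hi hik => ?_⟩
  · have := (hwin _ (hq A hA)).1 ⟨A, hA, rfl⟩
    have := hval A hA
    omega
  · rw [hval A hA, hval B hB, h]
  · obtain ⟨A, hA, hAi⟩ := ht.2.2 (s + i) (by omega) (by omega)
    obtain ⟨A', hA', rfl⟩ := (hwin A hA).2 (by omega)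
    have := hval A' hA'
    exact ⟨A', hA', by omega⟩

lemma IsStd.restrict (hs : IsStd p t) (hφ : IsShift φ)
    (hq : ∀ A, InDiag q A → InDiag p (φ A))
    (hval : ∀ A, InDiag q A → t (φ A) = s + t' A) : IsStd q t' := by
  rw [isStd_iff_step] at hs ⊢
  intro A d hd hA hAd
  have hlt := hs (φ A) d hd (hq A hA) (hφ.map_add_step A d hd ▸ hq _ hAd)
  rw [← hφ.map_add_step A d hd, hval A hA, hval _ hAd] at hlt
  omega

lemma ColDomOn.restrict (hdom : ColDomOn l n lam mu t j) (hφ : IsShift φ) (hj : s + k ≤ j)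
    (hmu : ∀ A, InDiag mu' A → InDiag mu (φ A))
    (hval : ∀ A, InDiag mu' A → t (φ A) = s + t' A)
    (hlam : ∀ B, InDiag lam' B → InDiag lam (φ B))
    (hcol : ∀ B, InDiag lam' B → colTab l n lam (φ B) = s + colTab l' n' lam' B) :
    ColDomOn l' n' lam' mu' t' k := by
  intro i A B hi hik hA htA hB htB
  rw [← hφ.weaklyLeft_iff]
  exact hdom (s + i) _ _ (by omega) (by omega) (hmu A hA) (by rw [hval A hA, htA])
    (hlam B hB) (by rw [hcol B hB, htB])

end Shift

section ColumnSplit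

/-- `A` lies in the copy of `[μ_L(c,m)]` inside `[μ]`. -/
def InLeft (c m : ℕ) (A : Node) : Prop := m < A.2.2 ∨ (A.2.2 = m ∧ A.2.1 ≤ c)

/-- The identification of `[μ_L(c,m)]` with a subset of `[μ]`. -/
def ofLeft (m : ℕ) (A : Node) : Node := (A.1, A.2.1, m + A.2.2 - 1)

/-- The identification of `[μ_R(c,m)]` with a subset of `[μ]`. -/
def ofRight (c m : ℕ) (A : Node) : Node := (A.1, A.2.1 + if A.2.2 = m then c else 0, A.2.2)

variable {c m nL : ℕ} {p : ℕ → ℕ → ℕ} {A : Node}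

lemma InLeft.of_weaklyLeft {B : Node} (hAB : WeaklyLeft A B) (hB : InLeft c m B) :
    InLeft c m A := by
  unfold WeaklyLeft at hAB
  unfold InLeft at hB ⊢
  omega

lemma isShift_ofLeft (hm : 1 ≤ m) : IsShift (ofLeft m) where
  injective := by
    rintro ⟨r, c', k⟩ ⟨r', c'', k'⟩ h
    simp only [ofLeft, Prod.mk.injEq] at h ⊢
    omega
  map_add_step := by
    rintro ⟨r, c', k⟩ d (rfl | rfl) <;> rfl
  weaklyLeft_iff := by
    rintro ⟨r, c', k⟩ ⟨r', c'', k'⟩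
    simp only [WeaklyLeft, ofLeft]
    omega

lemma isShift_ofRight : IsShift (ofRight c m) where
  injective := by
    rintro ⟨r, c', k⟩ ⟨r', c'', k'⟩ h
    simp only [ofRight, Prod.mk.injEq] at h ⊢
    split_ifs at h <;> omega
  map_add_step := by
    rintro ⟨r, c', k⟩ d (rfl | rfl)
    · simp only [ofRight, Prod.mk_add_mk, add_zero, Prod.mk.injEq, and_true, true_and]
      omega
    · simp only [ofRight, Prod.mk_add_mk, add_zero]
  weaklyLeft_iff := by
    rintro ⟨r, c', k⟩ ⟨r', c'', k'⟩
    simp only [WeaklyLeft, ofRight]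
    split_ifs <;> omega

lemma inDiag_leftPart_iff (hm : 1 ≤ m) :
    InDiag (leftPart p c m) A ↔ InDiag p (ofLeft m A) ∧ InLeft c m (ofLeft m A) := by
  obtain ⟨r, c', k⟩ := A
  simp only [InDiag, InLeft, leftPart, ofLeft]
  split_ifs with h0 h1
  · omega
  · subst h1
    rw [Nat.add_sub_cancel]
    omega
  · omega

lemma inDiag_rightPart_iff :
    InDiag (rightPart p c m) A ↔ InDiag p (ofRight c m A) ∧ ¬InLeft c m (ofRight c m A) := by
  obtain ⟨r, c', k⟩ := A
  simp only [InDiag, InLeft, rightPart, ofRight]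
  split_ifs <;> subst_vars <;> omega

lemma exists_leftPart_iff (hm : 1 ≤ m) (hA : InDiag p A) :
    (∃ A', InDiag (leftPart p c m) A' ∧ ofLeft m A' = A) ↔ InLeft c m A := by
  refine ⟨fun ⟨A', hA', h⟩ => h ▸ ((inDiag_leftPart_iff hm).1 hA').2, fun h => ?_⟩
  obtain ⟨r, c', k⟩ := A
  have hA' : ofLeft m (r, c', k + 1 - m) = (r, c', k) := by
    simp only [InLeft] at h
    simp only [ofLeft, Prod.mk.injEq, true_and]
    omega
  exact ⟨_, (inDiag_leftPart_iff hm).2 (hA' ▸ ⟨hA, h⟩), hA'⟩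

lemma exists_rightPart_iff (hA : InDiag p A) :
    (∃ A', InDiag (rightPart p c m) A' ∧ ofRight c m A' = A) ↔ ¬InLeft c m A := by
  refine ⟨fun ⟨A', hA', h⟩ => h ▸ (inDiag_rightPart_iff.1 hA').2, fun h => ?_⟩
  obtain ⟨r, c', k⟩ := A
  have hA' : ofRight c m (r, c' - if k = m then c else 0, k) = (r, c', k) := by
    simp only [InLeft] at h
    simp only [ofRight, Prod.mk.injEq, true_and, and_true]
    split_ifs <;> omega
  exact ⟨_, inDiag_rightPart_iff.2 (hA' ▸ ⟨hA, h⟩), hA'⟩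

lemma glueLR_ofLeft {tL tR : Node → ℕ} (hm : 1 ≤ m) (h : InLeft c m (ofLeft m A)) :
    glueLR nL c m tL tR (ofLeft m A) = tL A := by
  obtain ⟨r, c', k⟩ := A
  simp only [InLeft, ofLeft] at h
  unfold glueLR ofLeft
  dsimp only
  rw [if_neg (by omega)]
  by_cases hk : k = 1
  · subst hk
    rw [if_pos (by omega), if_pos (by omega)]
  · rw [if_neg (by omega), show m + k - 1 - m + 1 = k by omega]

lemma glueLR_ofRight {tL tR : Node → ℕ} (h : ¬InLeft c m (ofRight c m A)) :
    glueLR nL c m tL tR (ofRight c m A) = nL + tR A := by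
  obtain ⟨r, c', k⟩ := A
  simp only [InLeft, ofRight, not_or, not_lt] at h
  unfold glueLR ofRight
  dsimp only
  rcases h.1.lt_or_eq with hk | rfl
  · rw [if_neg hk.ne, if_pos hk, add_zero]
  · simp only [↓reduceIte, true_and] at h
    rw [if_neg (lt_irrefl k), if_pos rfl, if_pos rfl, if_neg (by omega), Nat.add_sub_cancel]

end ColumnSplit

section Glue

variable {l n c m nL : ℕ} {lam mu : ℕ → ℕ → ℕ} {t tL tR : Node → ℕ} {A : Node}

lemma apply_ofLeft_of_glue (hm : 1 ≤ m)
    (hglue : ∀ A, InDiag mu A → t A = glueLR nL c m tL tR A)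
    (hA : InDiag (leftPart mu c m) A) : t (ofLeft m A) = tL A := by
  obtain ⟨hA, hL⟩ := (inDiag_leftPart_iff hm).1 hA
  rw [hglue _ hA, glueLR_ofLeft hm hL]

lemma apply_ofRight_of_glue (hglue : ∀ A, InDiag mu A → t A = glueLR nL c m tL tR A)
    (hA : InDiag (rightPart mu c m) A) : t (ofRight c m A) = nL + tR A := by
  obtain ⟨hA, hR⟩ := inDiag_rightPart_iff.1 hA
  rw [hglue _ hA, glueLR_ofRight hR]

lemma glue_cases (hm : 1 ≤ m) (hglue : ∀ A, InDiag mu A → t A = glueLR nL c m tL tR A)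
    (hA : InDiag mu A) :
    (InLeft c m A ∧ ∃ A', InDiag (leftPart mu c m) A' ∧ ofLeft m A' = A ∧ t A = tL A') ∨
      (¬InLeft c m A ∧
        ∃ A', InDiag (rightPart mu c m) A' ∧ ofRight c m A' = A ∧ t A = nL + tR A') := by
  by_cases h : InLeft c m A
  · obtain ⟨A', hA', rfl⟩ := (exists_leftPart_iff hm hA).2 h
    exact Or.inl ⟨h, A', hA', rfl, apply_ofLeft_of_glue hm hglue hA'⟩
  · obtain ⟨A', hA', rfl⟩ := (exists_rightPart_iff hA).2 h
    exact Or.inr ⟨h, A', hA', rfl, apply_ofRight_of_glue hglue hA'⟩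

lemma inLeft_iff_of_glue {n' : ℕ} (hm : 1 ≤ m) (htL : IsTab nL (leftPart mu c m) tL)
    (htR : IsTab n' (rightPart mu c m) tR)
    (hglue : ∀ A, InDiag mu A → t A = glueLR nL c m tL tR A) (hA : InDiag mu A) :
    InLeft c m A ↔ t A ≤ nL := by
  rcases glue_cases hm hglue hA with ⟨hL, A', hA', -, htA⟩ | ⟨hL, A', hA', -, htA⟩
  · have := (htL.1 A' hA').2
    exact iff_of_true hL (by omega)
  · have := (htR.1 A' hA').1
    exact iff_of_false hL (by omega)

lemma eq_glueLR_of_split (hm : 1 ≤ m)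
    (hsplit : ∀ A, InDiag mu A → (InLeft c m A ↔ t A ≤ nL)) (hA : InDiag mu A) :
    t A = glueLR nL c m (fun A => t (ofLeft m A)) (fun A => t (ofRight c m A) - nL) A := by
  by_cases h : InLeft c m A
  · obtain ⟨A', -, rfl⟩ := (exists_leftPart_iff hm hA).2 h
    rw [glueLR_ofLeft hm h]
  · have := (hsplit A hA).not.1 h
    obtain ⟨A', -, rfl⟩ := (exists_rightPart_iff hA).2 h
    rw [glueLR_ofRight h]
    omega

lemma isTab_of_glue (hm : 1 ≤ m) (hnL : nL ≤ n)
    (hglue : ∀ A, InDiag mu A → t A = glueLR nL c m tL tR A)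
    (htL : IsTab nL (leftPart mu c m) tL) (htR : IsTab (n - nL) (rightPart mu c m) tR) :
    IsTab n mu t := by
  refine ⟨fun A hA => ?_, fun A B hA hB hAB => ?_, fun i hi hin => ?_⟩
  · rcases glue_cases hm hglue hA with ⟨-, A', hA', -, htA⟩ | ⟨-, A', hA', -, htA⟩
    · have := htL.1 A' hA'
      omega
    · have := htR.1 A' hA'
      omega
  · rcases glue_cases hm hglue hA with ⟨-, A', hA', rfl, htA⟩ | ⟨-, A', hA', rfl, htA⟩ <;>
      rcases glue_cases hm hglue hB with ⟨-, B', hB', rfl, htB⟩ | ⟨-, B', hB', rfl, htB⟩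
    · exact congrArg _ (htL.2.1 A' B' hA' hB' (by omega))
    · have := (htL.1 A' hA').2
      have := (htR.1 B' hB').1
      omega
    · have := (htR.1 A' hA').1
      have := (htL.1 B' hB').2
      omega
    · exact congrArg _ (htR.2.1 A' B' hA' hB' (by omega))
  · by_cases hiL : i ≤ nL
    · obtain ⟨A', hA', rfl⟩ := htL.2.2 i hi hiL
      exact ⟨_, ((inDiag_leftPart_iff hm).1 hA').1, apply_ofLeft_of_glue hm hglue hA'⟩
    · obtain ⟨A', hA', hA'i⟩ := htR.2.2 (i - nL) (by omega) (by omega)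
      refine ⟨_, (inDiag_rightPart_iff.1 hA').1, ?_⟩
      rw [apply_ofRight_of_glue hglue hA']
      omega

theorem isTab_iff_of_glue (hm : 1 ≤ m) (hnL : nL ≤ n)
    (hsplit : ∀ A, InDiag mu A → (InLeft c m A ↔ t A ≤ nL))
    (hglue : ∀ A, InDiag mu A → t A = glueLR nL c m tL tR A) :
    IsTab n mu t ↔ IsTab nL (leftPart mu c m) tL ∧ IsTab (n - nL) (rightPart mu c m) tR := by
  refine ⟨fun ht => ⟨?_, ?_⟩, fun ⟨htL, htR⟩ => isTab_of_glue hm hnL hglue htL htR⟩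
  · refine ht.restrict (s := 0) (isShift_ofLeft hm).injective (by omega)
      (fun A hA => ((inDiag_leftPart_iff hm).1 hA).1)
      (fun A hA => by rw [zero_add, apply_ofLeft_of_glue hm hglue hA]) fun A hA => ?_
    rw [exists_leftPart_iff hm hA, hsplit A hA]
    have := (ht.1 A hA).1
    omega
  · refine ht.restrict isShift_ofRight.injective (by omega)
      (fun A hA => (inDiag_rightPart_iff.1 hA).1) (fun A hA => apply_ofRight_of_glue hglue hA)
      fun A hA => ?_
    rw [exists_rightPart_iff hA, hsplit A hA]
    have := (ht.1 A hA).2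
    omega

theorem isStd_iff_of_glue (hm : 1 ≤ m)
    (hsplit : ∀ A, InDiag mu A → (InLeft c m A ↔ t A ≤ nL))
    (hglue : ∀ A, InDiag mu A → t A = glueLR nL c m tL tR A) :
    IsStd mu t ↔ IsStd (leftPart mu c m) tL ∧ IsStd (rightPart mu c m) tR := by
  constructor
  · intro hs
    exact ⟨hs.restrict (s := 0) (isShift_ofLeft hm)
        (fun A hA => ((inDiag_leftPart_iff hm).1 hA).1)
        fun A hA => by rw [zero_add, apply_ofLeft_of_glue hm hglue hA],
      hs.restrict isShift_ofRight (fun A hA => (inDiag_rightPart_iff.1 hA).1)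
        fun A hA => apply_ofRight_of_glue hglue hA⟩
  · rintro ⟨hsL, hsR⟩
    rw [isStd_iff_step] at hsL hsR ⊢
    intro A d hd hA hAd
    rcases glue_cases hm hglue hA with ⟨hL, A', hA', rfl, htA⟩ | ⟨hL, A', hA', rfl, htA⟩
    · by_cases hLd : InLeft c m (ofLeft m A' + d)
      · rw [← (isShift_ofLeft hm).map_add_step A' d hd] at hAd hLd ⊢
        have hAd' := (inDiag_leftPart_iff hm).2 ⟨hAd, hLd⟩
        rw [htA, apply_ofLeft_of_glue hm hglue hAd']
        exact hsL A' d hd hA' hAd'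
      · have := (hsplit _ hA).1 hL
        have := (hsplit _ hAd).not.1 hLd
        omega
    · have hLd : ¬InLeft c m (ofRight c m A' + d) := fun h =>
        hL (.of_weaklyLeft (weaklyLeft_add_step hd) h)
      rw [← isShift_ofRight.map_add_step A' d hd] at hAd hLd ⊢
      have hAd' := inDiag_rightPart_iff.2 ⟨hAd, hLd⟩
      rw [htA, apply_ofRight_of_glue hglue hAd']
      have := hsR A' d hd hA' hAd'
      omega

theorem colDomOn_iff_of_glue (hm : 1 ≤ m) (hnL : nL ≤ n)
    (hsplit : ∀ A, InDiag mu A → (InLeft c m A ↔ t A ≤ nL))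
    (hglue : ∀ A, InDiag mu A → t A = glueLR nL c m tL tR A)
    (hlamSplit : ∀ B, InDiag lam B → (InLeft c m B ↔ colTab l n lam B ≤ nL))
    (hlamGlue : ∀ B, InDiag lam B → colTab l n lam B = glueLR nL c m
      (colTab (l - m + 1) nL (leftPart lam c m)) (colTab m (n - nL) (rightPart lam c m)) B) :
    ColDomOn l n lam mu t n ↔
      ColDomOn (l - m + 1) nL (leftPart lam c m) (leftPart mu c m) tL nL ∧
        ColDomOn m (n - nL) (rightPart lam c m) (rightPart mu c m) tR (n - nL) := by
  constructor
  · intro hdom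
    exact ⟨hdom.restrict (s := 0) (isShift_ofLeft hm) (by omega)
        (fun A hA => ((inDiag_leftPart_iff hm).1 hA).1)
        (fun A hA => by rw [zero_add, apply_ofLeft_of_glue hm hglue hA])
        (fun B hB => ((inDiag_leftPart_iff hm).1 hB).1)
        (fun B hB => by rw [zero_add, apply_ofLeft_of_glue hm hlamGlue hB]),
      hdom.restrict isShift_ofRight (by omega) (fun A hA => (inDiag_rightPart_iff.1 hA).1)
        (fun A hA => apply_ofRight_of_glue hglue hA) (fun B hB => (inDiag_rightPart_iff.1 hB).1)
        (fun B hB => apply_ofRight_of_glue hlamGlue hB)⟩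
  · rintro ⟨hdL, hdR⟩ i A B hi hin hA htA hB htB
    rcases glue_cases hm hglue hA with ⟨hL, A', hA', rfl, htA'⟩ | ⟨hL, A', hA', rfl, htA'⟩
    · have hiL : i ≤ nL := htA ▸ (hsplit _ hA).1 hL
      obtain ⟨B', hB', rfl⟩ := (exists_leftPart_iff hm hB).2 ((hlamSplit B hB).2 (htB ▸ hiL))
      rw [(isShift_ofLeft hm).weaklyLeft_iff]
      exact hdL i A' B' hi hiL hA' (htA' ▸ htA) hB'
        (by rw [← apply_ofLeft_of_glue hm hlamGlue hB', htB])
    · have hiR : nL < i := htA ▸ not_le.1 ((hsplit _ hA).not.1 hL)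
      obtain ⟨B', hB', rfl⟩ :=
        (exists_rightPart_iff hB).2 fun h => absurd ((hlamSplit B hB).1 h) (by omega)
      rw [isShift_ofRight.weaklyLeft_iff]
      have := apply_ofRight_of_glue hlamGlue hB'
      exact hdR (i - nL) A' B' (by omega) (by omega) hA' (by omega) hB' (by omega)

end Glue

section Parts

variable {l n c m k : ℕ} {p : ℕ → ℕ → ℕ}

lemma sum_Ioc_add_right (f : ℕ → ℕ) (a b d : ℕ) :
    ∑ k ∈ Ioc (a + d) (b + d), f k = ∑ k ∈ Ioc a b, f (k + d) := by
  rw [← map_add_right_Ioc, sum_map]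
  rfl

lemma sum_Ioc_eq_add_add (f : ℕ → ℕ) {a j b : ℕ} (haj : a < j) (hjb : j ≤ b) :
    ∑ i ∈ Ioc a b, f i = ∑ i ∈ Ioc a (j - 1), f i + f j + ∑ i ∈ Ioc j b, f i := by
  obtain ⟨j, rfl⟩ : ∃ j', j = j' + 1 := ⟨j - 1, by omega⟩
  rw [← sum_Ioc_consecutive f haj.le hjb, sum_Ioc_succ_top (by omega), Nat.add_sub_cancel]

lemma mpSize_eq_sum_Ioc (l n : ℕ) (p : ℕ → ℕ → ℕ) :
    mpSize l n p = ∑ k ∈ Ioc 0 l, compSize n p k := by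
  rw [← Icc_add_one_left_eq_Ioc]
  rfl

lemma sum_compSize_leftPart (hk : 1 ≤ k) (hm1 : 1 ≤ m) (hm2 : m ≤ l) :
    ∑ j ∈ Ioc k (l - m + 1), compSize n (leftPart p c m) j =
      ∑ j ∈ Ioc (k + (m - 1)) l, compSize n p j := by
  have hl : l = l - m + 1 + (m - 1) := by omega
  rw [hl, sum_Ioc_add_right, ← hl]
  refine sum_congr rfl fun j hj => sum_congr rfl fun r _ => ?_
  rw [mem_Ioc] at hj
  rw [leftPart, if_neg (by omega), if_neg (by omega), show m + j - 1 = j + (m - 1) by omega]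

lemma mpSize_leftPart (hm1 : 1 ≤ m) (hm2 : m ≤ l) :
    mpSize (l - m + 1) n (leftPart p c m) =
      ∑ r ∈ Icc 1 n, min (p m r) c + ∑ k ∈ Ioc m l, compSize n p k := by
  rw [mpSize_eq_sum_Ioc, ← sum_Ioc_consecutive _ (Nat.zero_le 1) (by omega),
    sum_compSize_leftPart le_rfl hm1 hm2, show 1 + (m - 1) = m by omega]
  simp [compSize, leftPart]

lemma mpSize_rightPart (hm1 : 1 ≤ m) :
    mpSize m n (rightPart p c m) =
      ∑ k ∈ Ioc 0 (m - 1), compSize n p k + ∑ r ∈ Icc 1 n, (p m r - c) := by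
  have hcomp : ∀ k ∈ Ioc 0 (m - 1), compSize n (rightPart p c m) k = compSize n p k :=
    fun k hk => sum_congr rfl fun r _ => by
      rw [mem_Ioc] at hk
      rw [rightPart, if_pos (by omega)]
  rw [mpSize_eq_sum_Ioc, sum_Ioc_eq_add_add _ (Nat.zero_lt_of_lt hm1) le_rfl, Ioc_self, sum_empty,
    add_zero, sum_congr rfl hcomp]
  congr 1
  exact sum_congr rfl fun r _ => by simp [rightPart]

lemma compSize_eq_sum_min_add_sum_sub (k c : ℕ) :
    compSize n p k = ∑ r ∈ Icc 1 n, min (p k r) c + ∑ r ∈ Icc 1 n, (p k r - c) := by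
  rw [← sum_add_distrib]
  exact sum_congr rfl fun r _ => by omega

lemma mpSize_leftPart_add_mpSize_rightPart (hp : IsMP l n p) (hm1 : 1 ≤ m) (hm2 : m ≤ l) :
    mpSize (l - m + 1) n (leftPart p c m) + mpSize m n (rightPart p c m) = n := by
  have htot := hp.2.2
  rw [← mpSize, mpSize_eq_sum_Ioc, sum_Ioc_eq_add_add _ (Nat.zero_lt_of_lt hm1) hm2,
    compSize_eq_sum_min_add_sum_sub m c] at htot
  rw [mpSize_leftPart hm1 hm2, mpSize_rightPart hm1]
  omega

lemma IsMP.of_mpSize_le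
    (hz : ∀ k r, (k = 0 ∨ l < k ∨ r = 0 ∨ n < r) → p k r = 0)
    (ha : ∀ k r, 1 ≤ r → p k (r + 1) ≤ p k r) (hle : mpSize l n p ≤ n) :
    IsMP l (mpSize l n p) p := by
  have hrows : ∀ k r, mpSize l n p < r → p k r = 0 := by
    intro k r hr
    by_contra hne
    have hk : k ∈ Icc 1 l := mem_Icc.2 (by by_contra h; exact hne (hz k r (by omega)))
    have hrn : r ≤ n := by by_contra h; exact hne (hz k r (by omega))
    have : r ≤ mpSize l n p :=
      calc r = ∑ _r' ∈ Icc 1 r, 1 := by simp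
        _ ≤ ∑ r' ∈ Icc 1 r, p k r' := sum_le_sum fun r' hr' => by
            rw [mem_Icc] at hr'
            have := part_antitone ha (k := k) hr'.1 hr'.2
            omega
        _ ≤ compSize n p k := sum_le_sum_of_subset (Icc_subset_Icc_right hrn)
        _ ≤ mpSize l n p := single_le_sum (f := compSize n p) (fun _ _ => Nat.zero_le _) hk
    omega
  refine ⟨fun k r h => ?_, ha, sum_congr rfl fun k _ => ?_⟩
  · rcases h with h | h | h | h
    exacts [hz k r (by omega), hz k r (by omega), hz k r (by omega), hrows k r h]
  · exact sum_subset (Icc_subset_Icc_right hle) fun r hr hr' => hrows k r (by simp_all)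

lemma isMP_leftPart (hp : IsMP l n p) (hm1 : 1 ≤ m) (hm2 : m ≤ l) :
    IsMP (l - m + 1) (mpSize (l - m + 1) n (leftPart p c m)) (leftPart p c m) := by
  refine .of_mpSize_le (fun k r h => ?_) (fun k r hr => ?_) ?_
  · unfold leftPart
    split_ifs with h0 h1
    · rfl
    · simp [hp.1 m r (by omega)]
    · exact hp.1 _ r (by omega)
  · unfold leftPart
    split_ifs
    exacts [le_rfl, min_le_min_right c (hp.2.1 m r hr), hp.2.1 _ r hr]
  · have := mpSize_leftPart_add_mpSize_rightPart (c := c) hp hm1 hm2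
    omega

lemma isMP_rightPart (hp : IsMP l n p) (hm1 : 1 ≤ m) (hm2 : m ≤ l) :
    IsMP m (n - mpSize (l - m + 1) n (leftPart p c m)) (rightPart p c m) := by
  have hsize := mpSize_leftPart_add_mpSize_rightPart (c := c) hp hm1 hm2
  rw [show n - mpSize (l - m + 1) n (leftPart p c m) = mpSize m n (rightPart p c m) by omega]
  refine .of_mpSize_le (fun k r h => ?_) (fun k r hr => ?_) (by omega)
  · unfold rightPart
    split_ifs with h0 h1
    · exact hp.1 k r (by omega)
    · simp [hp.1 m r (by omega)]
    · rfl
  · unfold rightPart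
    split_ifs
    exacts [hp.2.1 k r hr, Nat.sub_le_sub_right (hp.2.1 m r hr) c, le_rfl]

end Parts

section ColumnReadingParts

variable {l n c m : ℕ} {p : ℕ → ℕ → ℕ}

lemma colTab_of_le {N : ℕ} (hp : IsMP l N p) (hN : N ≤ n) : colTab l n p = colTab l N p := by
  have hsum : ∀ f : ℕ → ℕ, f 0 = 0 →
      ∀ k, ∑ r ∈ Icc 1 n, f (p k r) = ∑ r ∈ Icc 1 N, f (p k r) :=
    fun f hf k => (sum_subset (Icc_subset_Icc_right hN) fun r hr hr' => by
      rw [hp.1 k r (by simp only [mem_Icc] at hr hr'; omega), hf]).symm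
  funext ⟨r, c', k⟩
  rw [colTab_eq, colTab_eq]
  congr 2
  · exact sum_congr rfl fun k' _ => hsum id rfl k'
  · exact hsum (min · (c' - 1)) (Nat.zero_min _) k

lemma colTab_leftPart (hm1 : 1 ≤ m) (hm2 : m ≤ l) {B : Node} (hB : InDiag (leftPart p c m) B) :
    colTab (l - m + 1) n (leftPart p c m) B = colTab l n p (ofLeft m B) := by
  obtain ⟨r, c', k⟩ := B
  obtain ⟨hB', hL⟩ := (inDiag_leftPart_iff hm1).1 hB
  simp only [ofLeft, InLeft] at hB' hL
  have hB1 : 1 ≤ c' := hB'.1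
  have hmin : ∀ r', min (leftPart p c m k r') (c' - 1) = min (p (m + k - 1) r') (c' - 1) := by
    intro r'
    unfold leftPart
    split_ifs with h0 h1
    · omega
    · subst h1
      rw [Nat.add_sub_cancel]
      omega
    · rfl
  dsimp only [ofLeft]
  rw [colTab_eq, colTab_eq, sum_compSize_leftPart (by omega) hm1 hm2, funext hmin,
    show k + (m - 1) = m + k - 1 by omega]

lemma colTab_rightPart (hm1 : 1 ≤ m) (hm2 : m ≤ l) {B : Node}
    (hB : InDiag (rightPart p c m) B) :
    mpSize (l - m + 1) n (leftPart p c m) + colTab m n (rightPart p c m) B =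
      colTab l n p (ofRight c m B) := by
  obtain ⟨r, c', k⟩ := B
  obtain ⟨hB', hR⟩ := inDiag_rightPart_iff.1 hB
  simp only [ofRight, InLeft] at hB' hR
  have hk : k ≤ m := by omega
  rw [mpSize_leftPart hm1 hm2]
  rcases hk.lt_or_eq with hk | rfl
  · have hsumR : ∑ j ∈ Ioc k m, compSize n (rightPart p c m) j =
        ∑ j ∈ Ioc k (m - 1), compSize n p j + ∑ r ∈ Icc 1 n, (p m r - c) := by
      rw [sum_Ioc_eq_add_add _ hk le_rfl, Ioc_self, sum_empty, add_zero]
      congr 1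
      · exact sum_congr rfl fun j hj => sum_congr rfl fun r _ => by
          rw [rightPart, if_pos (by simp only [mem_Ioc] at hj; omega)]
      · exact sum_congr rfl fun r _ => by simp [rightPart]
    have hmin : ∀ r', rightPart p c m k r' = p k r' := fun r' => by simp [rightPart, hk]
    dsimp only [ofRight]
    rw [if_neg hk.ne, add_zero, colTab_eq, colTab_eq, hsumR, funext hmin,
      sum_Ioc_eq_add_add _ hk hm2, compSize_eq_sum_min_add_sum_sub m c]
    omega
  · rw [if_pos rfl] at hB' hR
    have hmin : ∑ r ∈ Icc 1 n, min (p k r) c +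
        ∑ r ∈ Icc 1 n, min (rightPart p c k k r) (c' - 1) =
          ∑ r ∈ Icc 1 n, min (p k r) (c' + c - 1) := by
      rw [← sum_add_distrib]
      exact sum_congr rfl fun r _ => by simp only [rightPart, lt_irrefl, ↓reduceIte]; omega
    dsimp only [ofRight]
    rw [if_pos rfl, colTab_eq, colTab_eq, Ioc_self, sum_empty]
    omega

theorem colTab_eq_glueLR (hp : IsMP l n p) (hm1 : 1 ≤ m) (hm2 : m ≤ l) {B : Node}
    (hB : InDiag p B) :
    colTab l n p B = glueLR (mpSize (l - m + 1) n (leftPart p c m)) c m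
      (colTab (l - m + 1) (mpSize (l - m + 1) n (leftPart p c m)) (leftPart p c m))
      (colTab m (n - mpSize (l - m + 1) n (leftPart p c m)) (rightPart p c m)) B := by
  have hsize := mpSize_leftPart_add_mpSize_rightPart (c := c) hp hm1 hm2
  by_cases h : InLeft c m B
  · obtain ⟨B', hB', rfl⟩ := (exists_leftPart_iff hm1 hB).2 h
    rw [glueLR_ofLeft hm1 h,
      ← colTab_of_le (n := n) (isMP_leftPart (c := c) hp hm1 hm2) (by omega),
      colTab_leftPart hm1 hm2 hB']
  · obtain ⟨B', hB', rfl⟩ := (exists_rightPart_iff hB).2 h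
    rw [glueLR_ofRight h,
      ← colTab_of_le (n := n) (isMP_rightPart (c := c) hp hm1 hm2) (by omega),
      colTab_rightPart hm1 hm2 hB']

end ColumnReadingParts

section Counting

variable {l n c m nL : ℕ} {p lam mu : ℕ → ℕ → ℕ} {t : Node → ℕ}

lemma card_filter_inLeft (hp : IsMP l n p) (hm1 : 1 ≤ m) (hm2 : m ≤ l) :
    ((cells l n p).filter (InLeft c m)).card = mpSize (l - m + 1) n (leftPart p c m) := by
  have hpL := isMP_leftPart (c := c) hp hm1 hm2
  rw [← card_cells hpL, ← card_image_of_injective (cells _ _ (leftPart p c m))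
    (isShift_ofLeft hm1).injective]
  congr 1
  ext A
  rw [Finset.mem_filter, mem_image]
  constructor
  · rintro ⟨hA, hL⟩
    obtain ⟨A', hA', rfl⟩ := (exists_leftPart_iff hm1 ((mem_cells hp).1 hA)).2 hL
    exact ⟨A', (mem_cells hpL).2 hA', rfl⟩
  · rintro ⟨A', hA', rfl⟩
    obtain ⟨hA, hL⟩ := (inDiag_leftPart_iff hm1).1 ((mem_cells hpL).1 hA')
    exact ⟨(mem_cells hp).2 hA, hL⟩

lemma IsTab.card_filter_le {k : ℕ} (ht : IsTab n p t) (hp : IsMP l n p) (hk : k ≤ n) :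
    ((cells l n p).filter fun A => t A ≤ k).card = k := by
  have himage : ((cells l n p).filter fun A => t A ≤ k).image t = Icc 1 k := by
    ext i
    simp only [mem_image, Finset.mem_filter, mem_Icc, mem_cells hp]
    constructor
    · rintro ⟨A, ⟨hA, hAk⟩, rfl⟩
      exact ⟨(ht.1 A hA).1, hAk⟩
    · rintro ⟨hi, hik⟩
      obtain ⟨A, hA, rfl⟩ := ht.2.2 i hi (hik.trans hk)
      exact ⟨A, ⟨hA, hik⟩, rfl⟩
  have hinj : Set.InjOn t ((cells l n p).filter fun A => t A ≤ k) := fun A hA B hB h => by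
    rw [mem_coe, Finset.mem_filter, mem_cells hp] at hA hB
    exact ht.2.1 A B hA.1 hB.1 h
  rw [← card_image_of_injOn hinj, himage, Nat.card_Icc, Nat.add_sub_cancel]

theorem inLeft_iff_of_colDomOn (hlam : IsMP l n lam) (hmu : IsMP l n mu) (hm1 : 1 ≤ m)
    (hm2 : m ≤ l) (hnL : mpSize (l - m + 1) n (leftPart mu c m) = nL) (ht : IsTab n mu t)
    (hdom : ColDomOn l n lam mu t n)
    (hlamSplit : ∀ B, InDiag lam B → (InLeft c m B ↔ colTab l n lam B ≤ nL)) {A : Node}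
    (hA : InDiag mu A) : InLeft c m A ↔ t A ≤ nL := by
  have hnLn : nL ≤ n := hnL ▸ Nat.le.intro (mpSize_leftPart_add_mpSize_rightPart hmu hm1 hm2)
  have hle : ∀ A, InDiag mu A → t A ≤ nL → InLeft c m A := fun A hA h => by
    obtain ⟨B, hB, hBt⟩ := (isTab_colTab hlam).2.2 (t A) (ht.1 A hA).1 (h.trans hnLn)
    exact .of_weaklyLeft (hdom _ A B (ht.1 A hA).1 (ht.1 A hA).2 hA rfl hB hBt)
      ((hlamSplit B hB).2 (hBt ▸ h))
  refine ⟨fun hL => ?_, hle A hA⟩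
  have hsub : (cells l n mu).filter (fun A => t A ≤ nL) ⊆ (cells l n mu).filter (InLeft c m) :=
    fun A hA => by
      rw [Finset.mem_filter] at hA ⊢
      exact ⟨hA.1, hle A ((mem_cells hmu).1 hA.1) hA.2⟩
  have heq := eq_of_subset_of_card_le hsub
    (by rw [card_filter_inLeft hmu hm1 hm2, hnL, ht.card_filter_le hmu hnLn])
  have hmem : A ∈ (cells l n mu).filter (InLeft c m) :=
    Finset.mem_filter.2 ⟨(mem_cells hmu).2 hA, hL⟩
  rw [← heq] at hmem
  exact (Finset.mem_filter.1 hmem).2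

end Counting

theorem stdColDom_generalised_column_removal_general (l n : ℕ)
    (c m : ℕ) (hm1 : 1 ≤ m) (hm2 : m ≤ l)
    (lam mu : ℕ → ℕ → ℕ) (hlam : IsMP l n lam) (hmu : IsMP l n mu)
    (nL : ℕ) (hnL : nL = mpSize (l - m + 1) n (leftPart lam c m))
    (heq : mpSize (l - m + 1) n (leftPart mu c m) = nL) :
    ∀ t : Node → ℕ,
      (IsTab n mu t ∧ IsStd mu t ∧ ColDomOn l n lam mu t n) ↔
        ∃ tL tR : Node → ℕ,
          IsTab nL (leftPart mu c m) tL ∧ IsStd (leftPart mu c m) tL ∧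
          ColDomOn (l - m + 1) nL (leftPart lam c m) (leftPart mu c m) tL nL ∧
          IsTab (n - nL) (rightPart mu c m) tR ∧ IsStd (rightPart mu c m) tR ∧
          ColDomOn m (n - nL) (rightPart lam c m) (rightPart mu c m) tR (n - nL) ∧
          ∀ A, InDiag mu A → t A = glueLR nL c m tL tR A := by
  subst hnL
  have hnLn := Nat.le.intro (mpSize_leftPart_add_mpSize_rightPart (c := c) hlam hm1 hm2)
  have hlamGlue := fun B (hB : InDiag lam B) => colTab_eq_glueLR (c := c) hlam hm1 hm2 hB
  have hlamSplit := fun B (hB : InDiag lam B) => inLeft_iff_of_glue hm1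
    (isTab_colTab (isMP_leftPart hlam hm1 hm2)) (isTab_colTab (isMP_rightPart hlam hm1 hm2))
    hlamGlue hB
  intro t
  constructor
  · rintro ⟨htab, hstd, hdom⟩
    have hsplit := fun A (hA : InDiag mu A) =>
      inLeft_iff_of_colDomOn hlam hmu hm1 hm2 heq htab hdom hlamSplit hA
    have hglue := fun A (hA : InDiag mu A) => eq_glueLR_of_split hm1 hsplit hA
    obtain ⟨htL, htR⟩ := (isTab_iff_of_glue hm1 hnLn hsplit hglue).1 htab
    obtain ⟨hsL, hsR⟩ := (isStd_iff_of_glue hm1 hsplit hglue).1 hstd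
    obtain ⟨hdL, hdR⟩ := (colDomOn_iff_of_glue hm1 hnLn hsplit hglue hlamSplit hlamGlue).1 hdom
    exact ⟨_, _, htL, hsL, hdL, htR, hsR, hdR, hglue⟩
  · rintro ⟨tL, tR, htL, hsL, hdL, htR, hsR, hdR, hglue⟩
    have hsplit := fun A (hA : InDiag mu A) => inLeft_iff_of_glue hm1 htL htR hglue hA
    exact ⟨(isTab_iff_of_glue hm1 hnLn hsplit hglue).2 ⟨htL, htR⟩,
      (isStd_iff_of_glue hm1 hsplit hglue).2 ⟨hsL, hsR⟩,
      (colDomOn_iff_of_glue hm1 hnLn hsplit hglue hlamSplit hlamGlue).2 ⟨hdL, hdR⟩⟩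

/-- generalised column removal for dominated tableaux. If `λ ⊵ μ`
and `|λ_L(c,m)| = |μ_L(c,m)| = n_L`, then
`Std_λ(μ) = { t_L # t_R : t_L ∈ Std_{λ_L(c,m)}(μ_L(c,m)),
t_R ∈ Std_{λ_R(c,m)}(μ_R(c,m)) }`. -/
theorem stdColDom_generalised_column_removal (l n : ℕ) (hl : 1 ≤ l) (hn : 1 ≤ n)
    (c m : ℕ) (hm1 : 1 ≤ m) (hm2 : m ≤ l)
    (lam mu : ℕ → ℕ → ℕ) (hlam : IsMP l n lam) (hmu : IsMP l n mu)
    (hdom : Dom l n lam mu)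
    (nL : ℕ) (hnL : nL = mpSize (l - m + 1) n (leftPart lam c m))
    (heq : mpSize (l - m + 1) n (leftPart mu c m) = nL) :
    ∀ t : Node → ℕ,
      (IsTab n mu t ∧ IsStd mu t ∧ ColDomOn l n lam mu t n) ↔
        ∃ tL tR : Node → ℕ,
          IsTab nL (leftPart mu c m) tL ∧ IsStd (leftPart mu c m) tL ∧
          ColDomOn (l - m + 1) nL (leftPart lam c m) (leftPart mu c m) tL nL ∧
          IsTab (n - nL) (rightPart mu c m) tR ∧ IsStd (rightPart mu c m) tR ∧
          ColDomOn m (n - nL) (rightPart lam c m) (rightPart mu c m) tR (n - nL) ∧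
          ∀ A, InDiag mu A → t A = glueLR nL c m tL tR A :=
  stdColDom_generalised_column_removal_general l n c m hm1 hm2 lam mu hlam hmu nL hnL heq

end FS
end
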